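/- arXiv:2605.17756 — 5 statements merged into one kernel-verified Lean document; each statement's English description precedes it below -/
import Mathlib

section
/- Let f ∈ (1/z)·K[[1/z]] and let L = ∑_{j=0}^m (−1)^j a_j(z) ∂_z^j ∈ K[z,∂_z]. Then the following are equivalent: (i) L·f ∈ K[z]; (ii) φ_f(L*·P) = 0 for every polynomial P ∈ K[t]. -/
open Polynomial

/-- Formal Laurent-type series in `1/z`: the function records the coefficient of `z^{-k}`. -/
abbrev LS (K : Type*) := ℤ → K

variable {K : Type*} [Field K]

/-- membership in `(1/z)·K[[1/z]]`: no terms `z^{-k}` with `k ≤ 0`. -/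
def InTail (f : LS K) : Prop := ∀ k : ℤ, k ≤ 0 → f k = 0

/-- The Laurent-series representation of a polynomial `P ∈ K[z]`. -/
noncomputable def ofPoly (P : Polynomial K) : LS K := fun k => if k ≤ 0 then P.coeff (-k).toNat else 0

/-- `f` is (the Laurent expansion of) a polynomial in `z`. -/
def IsPol (f : LS K) : Prop := ∃ P : Polynomial K, f = ofPoly P

/-- Multiplication by `z`. -/
def zmul (f : LS K) : LS K := fun k => f (k + 1)

/-- The derivation `∂_z`. -/
noncomputable def dz (f : LS K) : LS K := fun k => ((1 - k : ℤ) : K) * f (k - 1)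

/-- Multiplication by a polynomial `P(z)`. -/
noncomputable def pmul (P : Polynomial K) (f : LS K) : LS K :=
  fun k => ∑ i ∈ Finset.range (P.natDegree + 1), P.coeff i * f (k + i)

/-- The projection `π` deleting the polynomial part. -/
def piProj (f : LS K) : LS K := fun k => if 1 ≤ k then f k else 0

/-- The action of the differential operator `L = ∑_{j=0}^m (-1)^j a_j(z) ∂_z^j`. -/
noncomputable def Wact (m : ℕ) (a : ℕ → Polynomial K) (f : LS K) : LS K :=
  ∑ j ∈ Finset.range (m + 1), ((-1 : K) ^ j) • pmul (a j) (dz^[j] f)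

/-- The formal adjoint `L*` acting on `K[t]`: `L*·P = ∑_j (d/dt)^j (a_j(t)·P(t))`. -/
noncomputable def Wadj (m : ℕ) (a : ℕ → Polynomial K) (P : Polynomial K) : Polynomial K :=
  ∑ j ∈ Finset.range (m + 1), Polynomial.derivative^[j] (a j * P)

/-- The formal `f`-integration transform `φ_f : K[t] → K`, `φ_f(t^k) = f_k`. -/
noncomputable def phi (f : LS K) (P : Polynomial K) : K :=
  ∑ i ∈ Finset.range (P.natDegree + 1), P.coeff i * f ((i : ℤ) + 1)

/-- `V_1` of an operator given through its action `T`. -/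
def V1A (T : LS K → LS K) : Set (LS K) := {f | InTail f ∧ IsPol (T f)}

/-- `V_n` of an operator given through its action `T`. -/
noncomputable def VnA (T : LS K → LS K) (n : ℕ) : Submodule K (LS K) :=
  Submodule.span K {g | ∃ k < n, ∃ f ∈ V1A T, g = piProj (zmul^[k] f)}

/-- `φ_f((P(z)-P(t))/(z-t))`, an element of `K[z]` (φ_f applied in the variable `t`). -/
noncomputable def Qof (f : LS K) (P : Polynomial K) : Polynomial K :=
  ∑ u ∈ Finset.range P.natDegree,
    Polynomial.C (∑ k ∈ Finset.Icc (u + 1) P.natDegree, P.coeff k * f ((k - u : ℕ) : ℤ)) *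
      Polynomial.X ^ u

/-- The order `ord_{(1,-1)}(L) = max_j (deg a_j - j)`. -/
noncomputable def ordW (m : ℕ) (a : ℕ → Polynomial K) : ℤ :=
  (Finset.range (m + 1)).sup' Finset.nonempty_range_add_one fun j => ((a j).natDegree : ℤ) - j

/-- Property (P) of the operator `L = ∑_j (-1)^j a_j(z) ∂_z^j` relative to `d`. -/
def PropP (m : ℕ) (a : ℕ → Polynomial K) (d : ℕ) : Prop :=
  ∀ k : ℕ,
    ∑ j ∈ (Finset.range (m + 1)).filter (fun j => ((a j).natDegree : ℤ) - j = d),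
        (a j).leadingCoeff * (ascPochhammer K ((a j).natDegree)).eval ((k : K) + d + 1) ≠ 0


-- auxiliary
noncomputable def phi' (f : LS K) (P : Polynomial K) : K := P.sum fun n c => c * f ((n : ℤ) + 1)

lemma phi_eq (f : LS K) (P : Polynomial K) : phi f P = phi' f P := by
  unfold phi phi'
  exact (Polynomial.sum_over_range P (f := fun n c => c * f ((n : ℤ) + 1)) (fun n => zero_mul _)).symm

lemma phi'_monomial (f : LS K) (n : ℕ) (c : K) : phi' f (monomial n c) = c * f ((n : ℤ) + 1) := by
  unfold phi'
  rw [Polynomial.sum_monomial_index]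
  simp

lemma phi'_add (f : LS K) (P Q : Polynomial K) : phi' f (P + Q) = phi' f P + phi' f Q := by
  unfold phi'
  rw [Polynomial.sum_add_index] <;> simp [add_mul]

lemma phi'_zero (f : LS K) : phi' f 0 = 0 := by simp [phi']

lemma phi'_psum (f : LS K) {ι : Type*} (s : Finset ι) (p : ι → Polynomial K) :
    phi' f (∑ i ∈ s, p i) = ∑ i ∈ s, phi' f (p i) := by
  classical
  induction s using Finset.induction with
  | empty => simp [phi'_zero]
  | @insert _ _ h ih => simp [Finset.sum_insert h, phi'_add, ih]

lemma phi'_left_add (g h : LS K) (P : Polynomial K) :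
    phi' (g + h) P = phi' g P + phi' h P := by
  unfold phi'
  rw [← Polynomial.sum_add]
  congr 1; funext n c; simp [mul_add]

lemma phi'_left_smul (c : K) (g : LS K) (P : Polynomial K) :
    phi' (c • g) P = c * phi' g P := by
  unfold phi' Polynomial.sum
  rw [Finset.mul_sum]
  congr 1; funext n; simp; ring

lemma phi'_left_zero (P : Polynomial K) : phi' (0 : LS K) P = 0 := by
  simp [phi', Polynomial.sum]

lemma phi'_left_sum {ι : Type*} (s : Finset ι) (g : ι → LS K) (P : Polynomial K) :
    phi' (∑ i ∈ s, g i) P = ∑ i ∈ s, phi' (g i) P := by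
  classical
  induction s using Finset.induction with
  | empty => simp [phi'_left_zero]
  | @insert _ _ h ih => rw [Finset.sum_insert h, Finset.sum_insert h, phi'_left_add, ih]

lemma phi'_pmul (g : LS K) (Q P : Polynomial K) :
    phi' (pmul Q g) P = phi' g (Q * P) := by
  induction P using Polynomial.induction_on' with
  | add p q hp hq => rw [phi'_add, hp, hq, mul_add, phi'_add]
  | monomial n c =>
    rw [phi'_monomial]
    conv_rhs => rw [Q.as_sum_range' (Q.natDegree + 1) (lt_add_one _)]
    rw [Finset.sum_mul, phi'_psum]
    unfold pmul
    rw [Finset.mul_sum]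
    refine Finset.sum_congr rfl fun i _ => ?_
    rw [monomial_mul_monomial, phi'_monomial]
    push_cast
    ring_nf

lemma phi'_dz (g : LS K) (P : Polynomial K) :
    phi' (dz g) P = - phi' g (derivative P) := by
  induction P using Polynomial.induction_on' with
  | add p q hp hq => rw [phi'_add, hp, hq, derivative_add, phi'_add]; ring
  | monomial n c =>
    rw [phi'_monomial, derivative_monomial, phi'_monomial]
    show c * (dz g ((n : ℤ) + 1)) = _
    unfold dz
    cases n with
    | zero => simp
    | succ m =>
      push_cast
      have : ((m : ℤ) + 1 + 1 - 1) = (m : ℤ) + 1 := by ring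
      rw [this]
      ring

lemma phi'_dz_iter (g : LS K) (j : ℕ) (P : Polynomial K) :
    phi' (dz^[j] g) P = (-1 : K) ^ j * phi' g (derivative^[j] P) := by
  induction j generalizing P with
  | zero => simp
  | succ j ih =>
    rw [Function.iterate_succ_apply', phi'_dz, ih, Function.iterate_succ_apply]
    ring

lemma key (m : ℕ) (a : ℕ → Polynomial K) (f : LS K) (P : Polynomial K) :
    phi' (Wact m a f) P = phi' f (Wadj m a P) := by
  unfold Wact Wadj
  rw [phi'_left_sum, phi'_psum]
  refine Finset.sum_congr rfl fun j _ => ?_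
  rw [phi'_left_smul, phi'_pmul, phi'_dz_iter, ← mul_assoc, ← mul_pow]
  simp

lemma intail_dz {g : LS K} (hg : InTail g) : InTail (dz g) := by
  intro k hk
  unfold dz
  rw [hg (k - 1) (by omega), mul_zero]

lemma intail_dz_iter {g : LS K} (hg : InTail g) (j : ℕ) : InTail (dz^[j] g) := by
  induction j with
  | zero => exact hg
  | succ j ih => rw [Function.iterate_succ_apply']; exact intail_dz ih

lemma wact_bound (m : ℕ) (a : ℕ → Polynomial K) (f : LS K) (hf : InTail f)
    (k : ℤ) (hk : k ≤ -((((Finset.range (m + 1)).sup fun j => (a j).natDegree) : ℕ) : ℤ)) :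
    Wact m a f k = 0 := by
  unfold Wact
  rw [Finset.sum_apply]
  refine Finset.sum_eq_zero fun j hj => ?_
  have hd : (a j).natDegree ≤ (Finset.range (m + 1)).sup fun j => (a j).natDegree :=
    Finset.le_sup (f := fun j => (a j).natDegree) hj
  simp only [Pi.smul_apply, smul_eq_mul]
  suffices h : pmul (a j) (dz^[j] f) k = 0 by rw [h, mul_zero]
  refine Finset.sum_eq_zero fun i hi => ?_
  have hi' : i ≤ (a j).natDegree := by
    have := Finset.mem_range.1 hi; omega
  rw [intail_dz_iter hf j (k + i) (by omega), mul_zero]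

lemma phi'_ofPoly (P0 P : Polynomial K) : phi' (ofPoly P0) P = 0 := by
  unfold phi' Polynomial.sum
  refine Finset.sum_eq_zero fun n _ => ?_
  have : ¬((n : ℤ) + 1 ≤ 0) := by omega
  simp [ofPoly, this]


/-- Corollary 4.4. For f ∈ (1/z)·K[[1/z]] and
L = ∑_{j=0}^m (−1)^j a_j(z) ∂_z^j ∈ K[z,∂_z]:
L·f ∈ K[z] iff φ_f (L*·P) = 0 for every polynomial P ∈ K[t]. -/
theorem stmt_3 {K : Type*} [Field K] [CharZero K] (f : LS K) (hf : InTail f)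
    (m : ℕ) (a : ℕ → Polynomial K) :
    IsPol (Wact m a f) ↔ ∀ P : Polynomial K, phi f (Wadj m a P) = 0 := by
  constructor
  · rintro ⟨P0, hP0⟩ P
    rw [phi_eq, ← key, hP0, phi'_ofPoly]
  · intro h
    have hpos : ∀ k : ℤ, 1 ≤ k → Wact m a f k = 0 := by
      intro k hk
      have h1 := h (X ^ (k - 1).toNat)
      rw [phi_eq, ← key, X_pow_eq_monomial, phi'_monomial, one_mul] at h1
      rwa [show (((k - 1).toNat : ℤ) + 1) = k by omega] at h1
    set B := (Finset.range (m + 1)).sup fun j => (a j).natDegree with hB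
    set P : Polynomial K := ∑ n ∈ Finset.range (B + 1), C (Wact m a f (-(n : ℤ))) * X ^ n
      with hP
    have hcoeff : ∀ n : ℕ, P.coeff n = Wact m a f (-(n : ℤ)) := by
      intro n
      rw [hP, Polynomial.finset_sum_coeff]
      simp only [Polynomial.coeff_C_mul, Polynomial.coeff_X_pow]
      by_cases hn : n < B + 1
      · rw [Finset.sum_eq_single n]
        · simp
        · intro b _ hb; simp [Ne.symm hb]
        · intro hnot; exact absurd (Finset.mem_range.2 hn) hnot
      · rw [Finset.sum_eq_zero, wact_bound m a f hf _ (by omega)]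
        intro b hb
        have : b < B + 1 := Finset.mem_range.1 hb
        have : n ≠ b := by omega
        simp [this]
    refine ⟨P, funext fun k => ?_⟩
    unfold ofPoly
    by_cases hk : k ≤ 0
    · rw [if_pos hk, hcoeff]
      congr 1
      omega
    · rw [if_neg hk, hpos k (by omega)]
end

section
/- Let L ∈ K[z,∂_z] and let (f_j)_{1≤j≤d} be a finite K-basis of V_1(L). Then the following are equivalent: (i) for every integer n ≥ 1, dim_K V_n(L) = n·d; (ii) the elements 1, f_1, …, f_d of K((1/z)) are linearly independent over the subfield K(z) of rational functions. -/
open Polynomial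

variable {K : Type*} [Field K]

-- auxiliary lemmas

lemma ofPoly_inj {P Q : Polynomial K} (h : ofPoly P = ofPoly Q) : P = Q := by
  ext i
  have := congrFun h (-(i : ℤ))
  simpa [ofPoly] using this

lemma ofPoly_zero : ofPoly (0 : Polynomial K) = 0 := by
  funext k; simp [ofPoly]

lemma piProj_ofPoly (P : Polynomial K) : piProj (ofPoly P) = (0 : LS K) := by
  funext k
  simp only [piProj, ofPoly]
  split_ifs <;> first | rfl | omega

lemma zmul_iter (k : ℕ) (g : LS K) : zmul^[k] g = fun l => g (l + k) := by
  induction k generalizing g with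
  | zero => funext l; simp
  | succ k ih =>
    rw [Function.iterate_succ_apply, ih]
    funext l
    show g (l + k + 1) = g (l + (k + 1 : ℕ))
    congr 1; push_cast; ring

noncomputable def piProjL : LS K →ₗ[K] LS K where
  toFun := piProj
  map_add' g h := by
    funext l; simp only [piProj, Pi.add_apply]; split_ifs <;> simp
  map_smul' c g := by
    funext l
    simp only [piProj, Pi.smul_apply, RingHom.id_apply, smul_eq_mul]
    split_ifs <;> simp

@[simp] lemma piProjL_apply (g : LS K) : piProjL g = piProj g := rfl

noncomputable def shiftL (k : ℕ) : LS K →ₗ[K] LS K where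
  toFun g := fun l => g (l + k)
  map_add' g h := rfl
  map_smul' c g := rfl

@[simp] lemma shiftL_apply (k : ℕ) (g : LS K) : shiftL k g = zmul^[k] g := by
  rw [zmul_iter]; rfl

lemma pmul_expand (P : Polynomial K) (g : LS K) (N : ℕ) (hN : P.natDegree < N) :
    pmul P g = ∑ k ∈ Finset.range N, P.coeff k • (zmul^[k] g) := by
  funext l
  simp only [pmul, Finset.sum_apply, Pi.smul_apply, zmul_iter, smul_eq_mul]
  apply Finset.sum_subset
  · exact Finset.range_subset_range.2 hN
  · intro i _ hi
    have : P.coeff i = 0 :=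
      P.coeff_eq_zero_of_natDegree_lt (by simp only [Finset.mem_range] at hi; omega)
    simp [this]

lemma pmul_tail_vanish (P : Polynomial K) {g : LS K} (hg : InTail g) {k : ℤ}
    (hk : k ≤ -(P.natDegree : ℤ)) : pmul P g k = 0 := by
  apply Finset.sum_eq_zero
  intro i hi
  simp only [Finset.mem_range] at hi
  rw [hg (k + i) (by omega), mul_zero]

lemma exists_ofPoly {g : LS K} (N : ℕ) (h1 : ∀ k : ℤ, 1 ≤ k → g k = 0)
    (h2 : ∀ k : ℤ, k ≤ -(N : ℤ) → g k = 0) : ∃ Q : Polynomial K, g = ofPoly Q := by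
  refine ⟨∑ u ∈ Finset.range N, Polynomial.C (g (-(u : ℤ))) * Polynomial.X ^ u, ?_⟩
  have hcoeff : ∀ u : ℕ,
      (∑ u ∈ Finset.range N, Polynomial.C (g (-(u : ℤ))) * Polynomial.X ^ u).coeff u
        = if u < N then g (-(u : ℤ)) else 0 := by
    intro u
    rw [Polynomial.finset_sum_coeff]
    simp only [Polynomial.coeff_C_mul, Polynomial.coeff_X_pow, mul_ite, mul_one, mul_zero]
    simp [Finset.sum_ite_eq, Finset.sum_ite_eq']
  funext k
  rw [ofPoly]
  by_cases hk : k ≤ 0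
  · rw [if_pos hk, hcoeff]
    by_cases hlt : (-k).toNat < N
    · rw [if_pos hlt]
      congr 1
      omega
    · rw [if_neg hlt]
      exact h2 k (by omega)
  · rw [if_neg hk]
    exact h1 k (by omega)

lemma coeff_sum_C_mul_X (c : ℕ → K) (n u : ℕ) :
    (∑ k ∈ Finset.range n, Polynomial.C (c k) * Polynomial.X ^ k).coeff u
      = if u < n then c u else 0 := by
  rw [Polynomial.finset_sum_coeff]
  simp only [Polynomial.coeff_C_mul, Polynomial.coeff_X_pow, mul_ite, mul_one, mul_zero]
  simp [Finset.sum_ite_eq, Finset.sum_ite_eq']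

lemma natDegree_sum_C_mul_X_lt (c : ℕ → K) (n : ℕ) (hn : 1 ≤ n) :
    (∑ k ∈ Finset.range n, Polynomial.C (c k) * Polynomial.X ^ k).natDegree < n := by
  have := Polynomial.natDegree_sum_le_of_forall_le (Finset.range n)
    (fun k => Polynomial.C (c k) * Polynomial.X ^ k) (n := n - 1) ?_
  · omega
  · intro k hk
    simp only [Finset.mem_range] at hk
    exact le_trans (Polynomial.natDegree_C_mul_X_pow_le _ _) (by omega)

lemma expand_sum {d : ℕ} (n : ℕ) (P : Fin d → Polynomial K)
    (hP : ∀ j, (P j).natDegree < n) (f : Fin d → LS K) :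
    piProj (∑ j, pmul (P j) (f j))
      = ∑ p : Fin n × Fin d, ((P p.2).coeff p.1) • piProj (zmul^[(p.1 : ℕ)] (f p.2)) := by
  have h1 : (∑ j, pmul (P j) (f j))
      = ∑ p : Fin n × Fin d, ((P p.2).coeff p.1) • zmul^[(p.1 : ℕ)] (f p.2) := by
    rw [Fintype.sum_prod_type, Finset.sum_comm]
    congr 1
    funext j
    rw [pmul_expand (P j) (f j) n (hP j), ← Fin.sum_univ_eq_sum_range]
  calc piProj (∑ j, pmul (P j) (f j))
      = piProjL (∑ p : Fin n × Fin d, ((P p.2).coeff p.1) • zmul^[(p.1 : ℕ)] (f p.2)) := by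
        rw [← h1]; rfl
    _ = ∑ p : Fin n × Fin d, ((P p.2).coeff p.1) • piProjL (zmul^[(p.1 : ℕ)] (f p.2)) := by
        rw [map_sum]; simp only [map_smul]
    _ = _ := rfl

lemma VnA_eq {d : ℕ} (T : LS K → LS K) (n : ℕ) (f : Fin d → LS K)
    (hmem : ∀ j, f j ∈ V1A T)
    (hspan : Submodule.span K (Set.range f) = Submodule.span K (V1A T)) :
    VnA T n = Submodule.span K
      (Set.range fun p : Fin n × Fin d => piProj (zmul^[(p.1 : ℕ)] (f p.2))) := by
  apply le_antisymm
  · rw [VnA]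
    apply Submodule.span_le.2
    rintro g ⟨k, hk, f0, hf0, rfl⟩
    have hf0' : f0 ∈ Submodule.span K (Set.range f) := by
      rw [hspan]; exact Submodule.subset_span hf0
    have hmem2 : (piProjL ∘ₗ shiftL k) f0 ∈
        Submodule.span K ((piProjL ∘ₗ shiftL (K := K) k) '' (Set.range f)) :=
      Submodule.apply_mem_span_image_of_mem_span _ hf0'
    have hsub : (piProjL ∘ₗ shiftL (K := K) k) '' (Set.range f) ⊆
        Set.range (fun p : Fin n × Fin d => piProj (zmul^[(p.1 : ℕ)] (f p.2))) := by
      rintro x ⟨y, ⟨j, rfl⟩, rfl⟩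
      exact ⟨(⟨k, hk⟩, j), by simp⟩
    have := Submodule.span_mono hsub hmem2
    simpa using this
  · apply Submodule.span_le.2
    rintro x ⟨p, rfl⟩
    apply Submodule.subset_span
    exact ⟨p.1, p.1.isLt, f p.2, hmem p.2, rfl⟩

lemma rank_iff_li {n dd : ℕ} (v : Fin n × Fin dd → LS K) :
    (Module.rank K (Submodule.span K (Set.range v)) = ((n * dd : ℕ) : Cardinal)) ↔
      LinearIndependent K v := by
  have : FiniteDimensional K (Submodule.span K (Set.range v)) :=
    FiniteDimensional.span_of_finite K (Set.finite_range v)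
  rw [← Module.finrank_eq_rank, Nat.cast_inj,
    linearIndependent_iff_card_eq_finrank_span]
  rw [Set.finrank]
  have hcard : Fintype.card (Fin n × Fin dd) = n * dd := by simp
  rw [hcard]
  exact eq_comm

lemma pmul_zero_left (g : LS K) : pmul (0 : Polynomial K) g = 0 := by
  funext k
  apply Finset.sum_eq_zero
  intro i _
  simp

lemma piProj_zero : piProj (0 : LS K) = 0 := by
  funext k; simp [piProj]

lemma ofPoly_neg (Q : Polynomial K) : ofPoly (-Q) = - ofPoly Q := by
  funext k
  simp only [ofPoly, Pi.neg_apply]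
  split_ifs <;> simp

/-- Lemma 5.2. Let (f_j) be a finite K-basis of V_1(L). Then
dim_K V_n(L) = n·d for all n ≥ 1 iff 1, f_1, …, f_d are linearly independent over K(z). -/
theorem stmt_4 {K : Type*} [Field K] [CharZero K] (m : ℕ) (a : ℕ → Polynomial K)
    (d : ℕ) (f : Fin d → LS K) (hmem : ∀ j, f j ∈ V1A (Wact m a))
    (hli : LinearIndependent K f)
    (hspan : Submodule.span K (Set.range f) = Submodule.span K (V1A (Wact m a))) :
    (∀ n : ℕ, 1 ≤ n → Module.rank K (VnA (Wact m a) n) = ((n * d : ℕ) : Cardinal)) ↔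
      (∀ (P0 : Polynomial K) (P : Fin d → Polynomial K),
        ofPoly P0 + ∑ j, pmul (P j) (f j) = 0 → P0 = 0 ∧ ∀ j, P j = 0) := by
  have hV : ∀ n : ℕ, VnA (Wact m a) n = Submodule.span K
      (Set.range fun p : Fin n × Fin d => piProj (zmul^[(p.1 : ℕ)] (f p.2))) :=
    fun n => VnA_eq _ n f hmem hspan
  constructor
  · -- rank ⇒ poly
    intro hr P0 P h
    set n : ℕ := 1 + Finset.univ.sup (fun j => (P j).natDegree) with hn
    have hn1 : 1 ≤ n := Nat.le_add_right 1 _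
    have hPdeg : ∀ j, (P j).natDegree < n := by
      intro j
      have h0 : (P j).natDegree ≤ Finset.univ.sup (fun j => (P j).natDegree) := by
        simpa using Finset.le_sup (f := fun j => (P j).natDegree) (Finset.mem_univ j)
      omega
    have hli' : LinearIndependent K
        (fun p : Fin n × Fin d => piProj (zmul^[(p.1 : ℕ)] (f p.2))) := by
      have h0 := hr n hn1
      rw [hV n] at h0
      exact (rank_iff_li _).1 h0
    have h2 : piProj (∑ j, pmul (P j) (f j)) = 0 := by
      have hadd := map_add piProjL (ofPoly P0) (∑ j, pmul (P j) (f j))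
      simp only [piProjL_apply] at hadd
      have hpi : piProj (ofPoly P0 + ∑ j, pmul (P j) (f j)) = 0 := by
        rw [h, piProj_zero]
      rw [hadd, piProj_ofPoly, zero_add] at hpi
      exact hpi
    rw [expand_sum n P hPdeg f] at h2
    have hc := (Fintype.linearIndependent_iff.1 hli') (fun p => (P p.2).coeff p.1) h2
    have hP0 : ∀ j, P j = 0 := by
      intro j
      ext u
      by_cases hu : u < n
      · simpa using hc (⟨u, hu⟩, j)
      · simp [Polynomial.coeff_eq_zero_of_natDegree_lt
          (lt_of_lt_of_le (hPdeg j) (le_of_not_gt hu))]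
    refine ⟨?_, hP0⟩
    have hsum0 : (∑ j, pmul (P j) (f j)) = 0 := by
      apply Finset.sum_eq_zero
      intro j _
      rw [hP0 j, pmul_zero_left]
    rw [hsum0, add_zero] at h
    exact ofPoly_inj (by rw [h, ofPoly_zero])
  · -- poly ⇒ rank
    intro hpoly n hn1
    rw [hV n, rank_iff_li, Fintype.linearIndependent_iff]
    intro c hc p
    set c' : ℕ → Fin d → K := fun k j => if h : k < n then c (⟨k, h⟩, j) else 0 with hc'
    set P : Fin d → Polynomial K :=
      fun j => ∑ k ∈ Finset.range n, Polynomial.C (c' k j) * Polynomial.X ^ k with hPdef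
    have hPdeg : ∀ j, (P j).natDegree < n := fun j => natDegree_sum_C_mul_X_lt _ n hn1
    have hcoeff : ∀ (j : Fin d) (u : ℕ), (P j).coeff u = if u < n then c' u j else 0 :=
      fun j u => coeff_sum_C_mul_X _ n u
    have hc'eq : ∀ p : Fin n × Fin d, c' (p.1 : ℕ) p.2 = c p := by
      intro p
      show (if h : (p.1 : ℕ) < n then c (⟨(p.1 : ℕ), h⟩, p.2) else 0) = c p
      rw [dif_pos p.1.isLt]
    have hsum : ∑ q : Fin n × Fin d, c q • piProj (zmul^[(q.1 : ℕ)] (f q.2))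
        = piProj (∑ j, pmul (P j) (f j)) := by
      rw [expand_sum n P hPdeg f]
      apply Finset.sum_congr rfl
      intro q _
      rw [hcoeff, if_pos q.1.isLt, hc'eq q]
    have hg0 : piProj (∑ j, pmul (P j) (f j)) = 0 := by rw [← hsum]; exact hc
    set N : ℕ := Finset.univ.sup (fun j => (P j).natDegree) with hN
    have h1 : ∀ k : ℤ, 1 ≤ k → (∑ j, pmul (P j) (f j)) k = 0 := by
      intro k hk
      have := congrFun hg0 k
      simpa [piProj, hk] using this
    have h2 : ∀ k : ℤ, k ≤ -(N : ℤ) → (∑ j, pmul (P j) (f j)) k = 0 := by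
      intro k hk
      rw [Finset.sum_apply]
      apply Finset.sum_eq_zero
      intro j _
      apply pmul_tail_vanish (P j) (hmem j).1
      have : (P j).natDegree ≤ N := by
        simpa [hN] using Finset.le_sup (f := fun j => (P j).natDegree) (Finset.mem_univ j)
      omega
    obtain ⟨Q, hQ⟩ := exists_ofPoly N h1 h2
    have happ := hpoly (-Q) P (by rw [ofPoly_neg, ← hQ, neg_add_cancel])
    have h3 := hcoeff p.2 p.1
    rw [happ.2 p.2, Polynomial.coeff_zero, if_pos p.1.isLt, hc'eq p] at h3
    exact h3.symm
end

section
/- Let L ∈ K[z,∂_z], let n be a positive integer, and let R ∈ K[z,∂_z]. Then the following are equivalent: (i) R ∈ I_n(L), i.e. R·g ∈ K[z] for every g ∈ V_n(L); (ii) for every integer k with 0 ≤ k ≤ n−1, every f ∈ V_1(L), and every polynomial Q ∈ K[t], one has φ_f(t^k·(R*·Q)(t)) = 0. -/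
open Polynomial

variable {K : Type*} [Field K]

section Aux

variable {K : Type*} [Field K]

/-! ### Basic lemmas about `phi` -/

lemma phi_eq_range (f : LS K) (P : Polynomial K) {N : ℕ} (h : P.natDegree < N) :
    phi f P = ∑ i ∈ Finset.range N, P.coeff i * f ((i : ℤ) + 1) := by
  unfold phi
  refine Finset.sum_subset (Finset.range_subset_range.mpr h) ?_
  intro i _ hni
  simp only [Finset.mem_range, not_lt] at hni
  rw [Polynomial.coeff_eq_zero_of_natDegree_lt (by omega), zero_mul]

lemma phi_zero (f : LS K) : phi f 0 = 0 := by
  simp [phi]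

lemma phi_add (f : LS K) (P Q : Polynomial K) : phi f (P + Q) = phi f P + phi f Q := by
  set N := P.natDegree + Q.natDegree + (P + Q).natDegree + 1 with hN
  rw [phi_eq_range f P (N := N) (by omega), phi_eq_range f Q (N := N) (by omega),
    phi_eq_range f (P + Q) (N := N) (by omega), ← Finset.sum_add_distrib]
  refine Finset.sum_congr rfl fun i _ => ?_
  rw [Polynomial.coeff_add, add_mul]

lemma phi_smul (f : LS K) (c : K) (P : Polynomial K) : phi f (c • P) = c * phi f P := by
  rw [phi_eq_range f (c • P) (N := P.natDegree + 1)
    ((Polynomial.natDegree_smul_le c P).trans_lt (lt_add_one _)), phi, Finset.mul_sum]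
  refine Finset.sum_congr rfl fun i _ => ?_
  rw [Polynomial.coeff_smul, smul_eq_mul, mul_assoc]

lemma phi_sum (f : LS K) {ι : Type*} (s : Finset ι) (P : ι → Polynomial K) :
    phi f (∑ i ∈ s, P i) = ∑ i ∈ s, phi f (P i) := by
  classical
  induction s using Finset.induction_on with
  | empty => simp [phi_zero]
  | insert _ _ h ih => rw [Finset.sum_insert h, Finset.sum_insert h, phi_add, ih]

lemma phi_monomial (f : LS K) (k : ℕ) (c : K) :
    phi f (Polynomial.monomial k c) = c * f ((k : ℤ) + 1) := by
  rw [phi_eq_range f _ (N := k + 1)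
    ((Polynomial.natDegree_monomial_le c).trans_lt (lt_add_one _))]
  simp [Polynomial.coeff_monomial]

/-! ### Linearity and tail lemmas for the basic operations -/

lemma dz_tail {f : LS K} (hf : InTail f) : InTail (dz f) := by
  intro k hk
  simp only [dz]
  rw [hf (k - 1) (by omega), mul_zero]

lemma dz_iter_tail {f : LS K} (hf : InTail f) (j : ℕ) : InTail (dz^[j] f) := by
  induction j with
  | zero => exact hf
  | succ j ih => rw [Function.iterate_succ_apply']; exact dz_tail ih

lemma dz_add (f g : LS K) : dz (f + g) = dz f + dz g := by
  funext k; simp [dz, mul_add]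

lemma dz_smul (c : K) (f : LS K) : dz (c • f) = c • dz f := by
  funext k; simp [dz]; ring

lemma dz_zero : dz (0 : LS K) = 0 := by
  funext k; simp [dz]

lemma dz_iter_add (j : ℕ) (f g : LS K) : dz^[j] (f + g) = dz^[j] f + dz^[j] g := by
  induction j with
  | zero => rfl
  | succ j ih =>
      rw [Function.iterate_succ_apply', Function.iterate_succ_apply',
        Function.iterate_succ_apply', ih, dz_add]

lemma dz_iter_smul (j : ℕ) (c : K) (f : LS K) : dz^[j] (c • f) = c • dz^[j] f := by
  induction j with
  | zero => rfl
  | succ j ih =>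
      rw [Function.iterate_succ_apply', Function.iterate_succ_apply', ih, dz_smul]

lemma dz_iter_zero (j : ℕ) : dz^[j] (0 : LS K) = 0 := by
  induction j with
  | zero => rfl
  | succ j ih => rw [Function.iterate_succ_apply', ih, dz_zero]

lemma pmul_add (P : Polynomial K) (f g : LS K) : pmul P (f + g) = pmul P f + pmul P g := by
  funext k; simp [pmul, mul_add, Finset.sum_add_distrib]

lemma pmul_smul (P : Polynomial K) (c : K) (f : LS K) : pmul P (c • f) = c • pmul P f := by
  funext k
  simp only [pmul, Pi.smul_apply, smul_eq_mul, Finset.mul_sum]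
  refine Finset.sum_congr rfl fun u _ => ?_
  ring

lemma pmul_zero (P : Polynomial K) : pmul P (0 : LS K) = 0 := by
  funext k; simp [pmul]

lemma Wact_add (m : ℕ) (a : ℕ → Polynomial K) (f g : LS K) :
    Wact m a (f + g) = Wact m a f + Wact m a g := by
  unfold Wact
  rw [← Finset.sum_add_distrib]
  refine Finset.sum_congr rfl fun j _ => ?_
  rw [dz_iter_add, pmul_add, smul_add]

lemma Wact_smul (m : ℕ) (a : ℕ → Polynomial K) (c : K) (f : LS K) :
    Wact m a (c • f) = c • Wact m a f := by
  unfold Wact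
  rw [Finset.smul_sum]
  refine Finset.sum_congr rfl fun j _ => ?_
  rw [dz_iter_smul, pmul_smul, smul_comm]

lemma Wact_zero (m : ℕ) (a : ℕ → Polynomial K) : Wact m a (0 : LS K) = 0 := by
  unfold Wact
  refine Finset.sum_eq_zero fun j _ => ?_
  rw [dz_iter_zero, pmul_zero, smul_zero]

/-! ### `IsPol` lemmas -/

lemma ofPoly_add (P Q : Polynomial K) : ofPoly (P + Q) = ofPoly P + ofPoly Q := by
  funext k
  by_cases h : k ≤ 0 <;> simp [ofPoly, h]

lemma ofPoly_smul (c : K) (P : Polynomial K) : ofPoly (c • P) = c • ofPoly P := by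
  funext k
  by_cases h : k ≤ 0 <;> simp [ofPoly, h]

lemma IsPol_zero : IsPol (0 : LS K) := by
  refine ⟨0, funext fun k => ?_⟩
  by_cases h : k ≤ 0 <;> simp [ofPoly, h]

lemma IsPol_add {f g : LS K} (hf : IsPol f) (hg : IsPol g) : IsPol (f + g) := by
  obtain ⟨P, rfl⟩ := hf; obtain ⟨Q, rfl⟩ := hg
  exact ⟨P + Q, (ofPoly_add P Q).symm⟩

lemma IsPol_smul (c : K) {f : LS K} (hf : IsPol f) : IsPol (c • f) := by
  obtain ⟨P, rfl⟩ := hf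
  exact ⟨c • P, (ofPoly_smul c P).symm⟩

lemma IsPol.apply_pos {f : LS K} (hf : IsPol f) {k : ℤ} (hk : 1 ≤ k) : f k = 0 := by
  obtain ⟨P, rfl⟩ := hf
  simp [ofPoly, show ¬ k ≤ 0 by omega]

lemma isPol_of_bounded {h : LS K} (N : ℕ) (hlow : ∀ k : ℤ, k ≤ -(N : ℤ) → h k = 0)
    (hpos : ∀ k : ℤ, 1 ≤ k → h k = 0) : IsPol h := by
  refine ⟨∑ i ∈ Finset.range N, Polynomial.C (h (-(i : ℤ))) * Polynomial.X ^ i,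
    funext fun k => ?_⟩
  have hcoeff : ∀ j : ℕ,
      (∑ i ∈ Finset.range N, Polynomial.C (h (-(i : ℤ))) * Polynomial.X ^ i).coeff j
        = if j < N then h (-(j : ℤ)) else 0 := by
    intro j
    rw [Polynomial.finset_sum_coeff]
    simp only [Polynomial.coeff_C_mul, Polynomial.coeff_X_pow, mul_ite, mul_one, mul_zero]
    rw [Finset.sum_ite_eq (Finset.range N) j (fun i => h (-(i : ℤ)))]
    simp
  unfold ofPoly
  by_cases hk : k ≤ 0
  · rw [if_pos hk, hcoeff]
    by_cases hN : ((-k).toNat) < N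
    · rw [if_pos hN]
      congr 1
      omega
    · rw [if_neg hN]
      exact hlow k (by omega)
  · rw [if_neg hk]
    exact hpos k (by omega)

/-! ### Adjoint identities -/

lemma phi_derivative (f : LS K) (P : Polynomial K) :
    phi f (Polynomial.derivative P) = - phi (dz f) P := by
  induction P using Polynomial.induction_on' with
  | add P Q hP hQ => rw [map_add, phi_add, phi_add, hP, hQ, neg_add]
  | monomial k c =>
      rw [Polynomial.derivative_monomial, phi_monomial, phi_monomial]
      simp only [dz]
      rcases k with _ | k
      · simp
      · have : ((k + 1 : ℕ) : ℤ) + 1 - 1 = ((k : ℤ) + 1) := by push_cast; ring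
        rw [this]
        push_cast
        ring

lemma phi_iterate_derivative (f : LS K) (j : ℕ) (P : Polynomial K) :
    phi f (Polynomial.derivative^[j] P) = (-1 : K) ^ j * phi (dz^[j] f) P := by
  induction j generalizing P with
  | zero => simp
  | succ j ih =>
      rw [Function.iterate_succ_apply, ih (Polynomial.derivative P), phi_derivative,
        Function.iterate_succ_apply']
      ring

lemma phi_Xpow (f : LS K) (k : ℕ) : phi f (Polynomial.X ^ k) = f ((k : ℤ) + 1) := by
  rw [Polynomial.X_pow_eq_monomial, phi_monomial, one_mul]

lemma pmul_apply_phi (b : Polynomial K) (h : LS K) (k : ℕ) :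
    pmul b h ((k : ℤ) + 1) = phi h (b * Polynomial.X ^ k) := by
  conv_rhs => rw [Polynomial.as_sum_range' b (b.natDegree + 1) (lt_add_one _)]
  rw [Finset.sum_mul, phi_sum]
  unfold pmul
  refine Finset.sum_congr rfl fun u _ => ?_
  rw [Polynomial.X_pow_eq_monomial, Polynomial.monomial_mul_monomial, phi_monomial, mul_one]
  congr 2
  push_cast
  ring

/-- Key identity: the coefficient of `z^{-(k+1)}` in `R·f` is `φ_f(R*·t^k)`. -/
lemma Wact_apply_eq_phi_Wadj (m : ℕ) (a : ℕ → Polynomial K) (f : LS K) (k : ℕ) :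
    Wact m a f ((k : ℤ) + 1) = phi f (Wadj m a (Polynomial.X ^ k)) := by
  unfold Wact Wadj
  rw [phi_sum, Finset.sum_apply]
  refine Finset.sum_congr rfl fun j _ => ?_
  rw [Pi.smul_apply, smul_eq_mul, pmul_apply_phi, phi_iterate_derivative]

/-! ### `Wadj` linearity in `Q` -/

lemma monomial_eq_smul_Xpow (k : ℕ) (c : K) :
    (Polynomial.monomial k c : Polynomial K) = c • Polynomial.X ^ k := by
  rw [Polynomial.smul_eq_C_mul, Polynomial.C_mul_X_pow_eq_monomial]

lemma iter_derivative_add (j : ℕ) (P Q : Polynomial K) :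
    Polynomial.derivative^[j] (P + Q)
      = Polynomial.derivative^[j] P + Polynomial.derivative^[j] Q := by
  induction j generalizing P Q with
  | zero => rfl
  | succ j ih =>
      rw [Function.iterate_succ_apply, Function.iterate_succ_apply,
        Function.iterate_succ_apply, Polynomial.derivative_add, ih]

lemma Wadj_add (m : ℕ) (a : ℕ → Polynomial K) (P Q : Polynomial K) :
    Wadj m a (P + Q) = Wadj m a P + Wadj m a Q := by
  unfold Wadj
  rw [← Finset.sum_add_distrib]
  refine Finset.sum_congr rfl fun j _ => ?_
  rw [mul_add, iter_derivative_add]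

lemma Wadj_smul (m : ℕ) (a : ℕ → Polynomial K) (c : K) (P : Polynomial K) :
    Wadj m a (c • P) = c • Wadj m a P := by
  unfold Wadj
  rw [Finset.smul_sum]
  refine Finset.sum_congr rfl fun j _ => ?_
  rw [mul_smul_comm, Polynomial.iterate_derivative_smul]

/-- The central equivalence for a single series `g`. -/
lemma adjoint_zero_iff (m : ℕ) (a : ℕ → Polynomial K) (g : LS K) :
    (∀ k : ℤ, 1 ≤ k → Wact m a g k = 0) ↔ ∀ Q : Polynomial K, phi g (Wadj m a Q) = 0 := by
  constructor
  · intro hW Q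
    induction Q using Polynomial.induction_on' with
    | add P Q hP hQ => rw [Wadj_add, phi_add, hP, hQ, add_zero]
    | monomial k c =>
        rw [monomial_eq_smul_Xpow, Wadj_smul, phi_smul,
          ← Wact_apply_eq_phi_Wadj, hW _ (by omega), mul_zero]
  · intro hQ k hk
    have hk' : k = ((k - 1).toNat : ℤ) + 1 := by omega
    rw [hk', Wact_apply_eq_phi_Wadj]
    exact hQ _

/-! ### Lower bound on the support of `Wact` -/

lemma pmul_bounded {h : LS K} (hh : InTail h) (b : Polynomial K) (k : ℤ)
    (hk : k ≤ -(b.natDegree : ℤ)) : pmul b h k = 0 := by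
  unfold pmul
  refine Finset.sum_eq_zero fun u hu => ?_
  rw [Finset.mem_range] at hu
  rw [hh (k + u) (by omega), mul_zero]

lemma Wact_bounded (m : ℕ) (a : ℕ → Polynomial K) {f : LS K} (hf : InTail f) :
    ∃ N : ℕ, ∀ k : ℤ, k ≤ -(N : ℤ) → Wact m a f k = 0 := by
  refine ⟨(Finset.range (m + 1)).sup (fun j => (a j).natDegree), fun k hk => ?_⟩
  unfold Wact
  rw [Finset.sum_apply]
  refine Finset.sum_eq_zero fun j hj => ?_
  have h2 : (a j).natDegree ≤ (Finset.range (m + 1)).sup (fun j => (a j).natDegree) := by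
    exact Finset.le_sup (f := fun j => (a j).natDegree) hj
  rw [Pi.smul_apply, pmul_bounded (dz_iter_tail hf j) _ k (by omega), smul_zero]

/-! ### `phi` of the generators -/

lemma zmul_iter_apply (k : ℕ) (f : LS K) (j : ℤ) : zmul^[k] f j = f (j + k) := by
  induction k generalizing j with
  | zero => simp
  | succ k ih =>
      rw [Function.iterate_succ_apply']
      show zmul^[k] f (j + 1) = _
      rw [ih]
      congr 1
      push_cast
      ring

lemma phi_piProj_zmul (k : ℕ) (f : LS K) (Q : Polynomial K) :
    phi (piProj (zmul^[k] f)) Q = phi f (Polynomial.X ^ k * Q) := by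
  induction Q using Polynomial.induction_on' with
  | add P Q hP hQ => rw [phi_add, hP, hQ, mul_add, phi_add]
  | monomial i c =>
      rw [phi_monomial, monomial_eq_smul_Xpow, mul_smul_comm, ← pow_add, phi_smul, phi_Xpow]
      simp only [piProj, show (1 : ℤ) ≤ (i : ℤ) + 1 by omega, if_pos, zmul_iter_apply]
      congr 2
      push_cast
      ring

lemma piProj_tail (f : LS K) : InTail (piProj f) := by
  intro k hk
  simp [piProj, show ¬ (1 : ℤ) ≤ k by omega]

end Aux

/-- Lemma 5.7. R ∈ I_n(L) iff
φ_f(t^k·(R*·Q)(t)) = 0 for all 0 ≤ k ≤ n−1, f ∈ V_1(L) and Q ∈ K[t]. -/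
theorem stmt_6 {K : Type*} [Field K] [CharZero K] (mL : ℕ) (aL : ℕ → Polynomial K)
    (n : ℕ) (hn : 1 ≤ n) (mR : ℕ) (aR : ℕ → Polynomial K) :
    (∀ g ∈ VnA (Wact mL aL) n, IsPol (Wact mR aR g)) ↔
      (∀ k < n, ∀ f ∈ V1A (Wact mL aL), ∀ Q : Polynomial K,
        phi f (Polynomial.X ^ k * Wadj mR aR Q) = 0) := by
  constructor
  · intro hI k hk f hf Q
    have hg : piProj (zmul^[k] f) ∈ VnA (Wact mL aL) n :=
      Submodule.subset_span ⟨k, hk, f, hf, rfl⟩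
    have hpol := hI _ hg
    rw [← phi_piProj_zmul]
    exact ((adjoint_zero_iff mR aR _).mp (fun j hj => hpol.apply_pos hj)) Q
  · intro hphi g hg
    refine Submodule.span_induction ?_ (by rw [Wact_zero]; exact IsPol_zero)
      (fun x y _ _ hx hy => by rw [Wact_add]; exact IsPol_add hx hy)
      (fun c x _ hx => by rw [Wact_smul]; exact IsPol_smul c hx) hg
    rintro g ⟨k, hk, f, hf, rfl⟩
    obtain ⟨N, hN⟩ := Wact_bounded mR aR (piProj_tail (zmul^[k] f))
    refine isPol_of_bounded N hN ?_
    refine (adjoint_zero_iff mR aR _).mpr fun Q => ?_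
    rw [phi_piProj_zmul]
    exact hphi k hk f hf Q
end

section
/- With the multiple polylogarithm setup, for every positive integer n the operator R_n = L_{(m+1)^{r−1}n}·L_{(m+1)^{r−2}n}⋯L_{(m+1)n}·L_n belongs to the left ideal I_n(L); that is, R_n·g ∈ K[z] for every g ∈ V_n(L). -/
open Polynomial

variable {K : Type*} [Field K]

/-- The index set `S_ρ`: tuples s = (s_1,…,s_k) of positive integers of weight
`∑ s_j ≤ ρ` together with a = (α_{i_1},…,α_{i_k}) recorded through the indices i_j. -/
structure MPIdx (m ρ : ℕ) where
  k : ℕ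
  hk : 1 ≤ k
  s : Fin k → ℕ
  hs : ∀ j, 1 ≤ s j
  hw : (∑ j, s j) ≤ ρ
  a : Fin k → Fin m

open Classical in
/-- Coefficient of `z^{-N}` in the multiple polylogarithm
`Li_s(α_{i_1}/α_{i_2},…,α_{i_{k−1}}/α_{i_k}, α_{i_k}/z)`; the summand is written using
`∏_j x_j^{n_j} = ∏_j α_{i_j}^{n_j − n_{j−1}}` (with `n_0 = 0`). -/
noncomputable def mpCoeff {K : Type*} [Field K] {m ρ : ℕ} (α : Fin m → K)
    (I : MPIdx m ρ) (N : ℕ) : K :=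
  ∑ n ∈ Fintype.piFinset (fun _ : Fin I.k => Finset.range (N + 1)),
    if StrictMono n ∧ 0 < n ⟨0, I.hk⟩ ∧ n ⟨I.k - 1, Nat.sub_lt I.hk Nat.one_pos⟩ = N then
      (∏ j, α (I.a j) ^ (n j - if _h : (j : ℕ) = 0 then 0
          else n ⟨(j : ℕ) - 1, Nat.lt_of_le_of_lt (Nat.sub_le _ _) j.isLt⟩)) /
        ∏ j, ((n j : K)) ^ (I.s j)
    else 0

/-- The multiple polylogarithm `f_{s,a}(z) ∈ (1/z)·K[[1/z]]` as a Laurent series. -/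
noncomputable def mpLS {K : Type*} [Field K] {m ρ : ℕ} (α : Fin m → K)
    (I : MPIdx m ρ) : LS K :=
  fun N : ℤ => if 1 ≤ N then mpCoeff α I N.toNat else 0

/-- The action of the operator `L_N = (1/N!)·z^N·∏_i (z−α_i)^N·∂_z^N`. -/
noncomputable def Lop {K : Type*} [Field K] {m : ℕ} (N : ℕ) (α : Fin m → K)
    (f : LS K) : LS K :=
  ((N.factorial : K)⁻¹) •
    pmul (Polynomial.X ^ N * ∏ i, (Polynomial.X - Polynomial.C (α i)) ^ N) (dz^[N] f)

/-- The action of `L = L_{(m+1)^{r−1}}·L_{(m+1)^{r−2}}⋯L_{m+1}·L_1`. -/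
noncomputable def Lcomp {K : Type*} [Field K] {m : ℕ} (α : Fin m → K) :
    ℕ → LS K → LS K
  | 0 => id
  | (ρ + 1) => fun f => Lop ((m + 1) ^ ρ) α (Lcomp α ρ f)

/-- The action of `R_n = L_{(m+1)^{r−1}n}·L_{(m+1)^{r−2}n}⋯L_{(m+1)n}·L_n`. -/
noncomputable def Rcomp {K : Type*} [Field K] {m : ℕ} (α : Fin m → K) (n : ℕ) :
    ℕ → LS K → LS K
  | 0 => id
  | (ρ + 1) => fun f => Lop ((m + 1) ^ ρ * n) α (Rcomp α n ρ f)

/-- The formal adjoint `L_N*` of `L_N` acting on `K[t]`: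
`L_N* P = ((−1)^N/N!)·(d/dt)^N (t^N ∏_i (t−α_i)^N · P)`. -/
noncomputable def LadjN {K : Type*} [Field K] {m : ℕ} (N : ℕ) (α : Fin m → K)
    (P : Polynomial K) : Polynomial K :=
  ((-1 : K) ^ N * (N.factorial : K)⁻¹) •
    Polynomial.derivative^[N]
      (Polynomial.X ^ N * (∏ i, (Polynomial.X - Polynomial.C (α i)) ^ N) * P)

/-- The formal adjoint `R_n*` acting on `K[t]` (using `(L_1 L_2)* = L_2* L_1*`):
`R_n* = L_n* ∘ L_{(m+1)n}* ∘ ⋯ ∘ L_{(m+1)^{r−1}n}*`. -/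
noncomputable def Radj {K : Type*} [Field K] {m : ℕ} (α : Fin m → K) (n : ℕ) :
    ℕ → Polynomial K → Polynomial K
  | 0 => id
  | (ρ + 1) => fun P => Radj α n ρ (LadjN ((m + 1) ^ ρ * n) α P)

/-- `V_{n,ρ} = Span_K{π(z^k·f_{s,a}) : 0 ≤ k ≤ n−1, (s,a) ∈ S_ρ}`. -/
noncomputable def Vnrho {K : Type*} [Field K] {m : ℕ} (α : Fin m → K)
    (n ρ : ℕ) : Submodule K (LS K) :=
  Submodule.span K
    {g | ∃ k < n, ∃ I : MPIdx m ρ, g = piProj (zmul^[k] (mpLS α I))}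


namespace S14
open Polynomial Finset

variable {K : Type*} [Field K]

/-- `Y(σ)` : forward-shift operator with constant coefficients given by `Y`. -/
noncomputable def MA (Y : K[X]) (f : LS K) : LS K :=
  fun k => ∑ j ∈ Finset.range (Y.natDegree + 1), Y.coeff j * f (k + j)

/-- `q(δ)` : multiplication by the polynomial function `q(k)`. -/
noncomputable def MQ (q : K[X]) (f : LS K) : LS K :=
  fun k => q.eval (k : K) * f k

lemma MA_congr_range (Y : K[X]) (f : LS K) (k : ℤ) {D : ℕ} (hD : Y.natDegree < D) :
    MA Y f k = ∑ j ∈ Finset.range D, Y.coeff j * f (k + j) := by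
  unfold MA
  refine Finset.sum_subset (Finset.range_subset_range.2 hD) ?_
  intro j hj hj2
  rw [Polynomial.coeff_eq_zero_of_natDegree_lt, zero_mul]
  simp only [Finset.mem_range, not_lt] at hj2
  omega

lemma MA_add_poly (Y Z : K[X]) (f : LS K) : MA (Y + Z) f = MA Y f + MA Z f := by
  funext k
  have hD : (Y + Z).natDegree < max Y.natDegree Z.natDegree + 1 :=
    Nat.lt_succ_of_le (Polynomial.natDegree_add_le Y Z)
  rw [MA_congr_range (Y + Z) f k hD, Pi.add_apply,
    MA_congr_range Y f k (Nat.lt_succ_of_le (le_max_left _ _)),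
    MA_congr_range Z f k (Nat.lt_succ_of_le (le_max_right _ _)), ← Finset.sum_add_distrib]
  refine Finset.sum_congr rfl fun j _ => ?_
  rw [Polynomial.coeff_add, add_mul]

lemma MA_C (a : K) (f : LS K) : MA (C a) f = a • f := by
  funext k
  simp [MA, Polynomial.natDegree_C]

lemma MA_zero_poly (f : LS K) : MA (0 : K[X]) f = 0 := by
  funext k; simp [MA]

lemma MA_C_mul (a : K) (Z : K[X]) (f : LS K) : MA (C a * Z) f = a • MA Z f := by
  funext k
  rw [MA_congr_range (C a * Z) f k
    (Nat.lt_succ_of_le (Polynomial.natDegree_C_mul_le a Z)), Pi.smul_apply, MA,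
    smul_eq_mul, Finset.mul_sum]
  refine Finset.sum_congr rfl fun j _ => ?_
  rw [Polynomial.coeff_C_mul, mul_assoc]

lemma MA_X_mul (Y : K[X]) (f : LS K) (k : ℤ) : MA (X * Y) f k = MA Y f (k + 1) := by
  rcases eq_or_ne Y 0 with h | h
  · simp [h, MA_zero_poly, MA]
  have hd : (X * Y).natDegree = Y.natDegree + 1 := by
    rw [Polynomial.natDegree_mul Polynomial.X_ne_zero h, Polynomial.natDegree_X, add_comm]
  rw [MA, hd, Finset.sum_range_succ']
  have h0 : (X * Y).coeff 0 * f (k + (0:ℕ)) = 0 := by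
    rw [Polynomial.mul_coeff_zero, Polynomial.coeff_X_zero, zero_mul, zero_mul]
  rw [h0, add_zero, MA]
  refine Finset.sum_congr rfl fun j _ => ?_
  rw [Polynomial.coeff_X_mul]
  congr 1
  push_cast
  ring

lemma MA_mul (Y Z : K[X]) (f : LS K) : MA (Y * Z) f = MA Y (MA Z f) := by
  induction Y using Polynomial.induction_on with
  | C a => rw [MA_C_mul, MA_C]
  | add p q hp hq => rw [add_mul, MA_add_poly, MA_add_poly, hp, hq]
  | monomial j a ih =>
    funext k
    have e1 : C a * X ^ (j + 1) * Z = X * (C a * X ^ j * Z) := by ring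
    have e2 : C a * X ^ (j + 1) = X * (C a * X ^ j) := by ring
    rw [e1, MA_X_mul, ih, e2, MA_X_mul]

lemma MA_add_fun (Y : K[X]) (f g : LS K) : MA Y (f + g) = MA Y f + MA Y g := by
  funext k
  simp [MA, mul_add, Finset.sum_add_distrib]

lemma MA_smul_fun (Y : K[X]) (a : K) (f : LS K) : MA Y (a • f) = a • MA Y f := by
  funext k
  simp [MA, Finset.mul_sum]
  refine Finset.sum_congr rfl fun j _ => ?_
  ring

lemma MA_sub_fun (Y : K[X]) (f g : LS K) : MA Y (f - g) = MA Y f - MA Y g := by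
  funext k
  simp [MA, mul_sub, Finset.sum_sub_distrib]

lemma MQ_mul (q q' : K[X]) (f : LS K) : MQ (q * q') f = MQ q (MQ q' f) := by
  funext k; simp [MQ, mul_assoc]

lemma MQ_add_fun (q : K[X]) (f g : LS K) : MQ q (f + g) = MQ q f + MQ q g := by
  funext k; simp [MQ, mul_add]

lemma MQ_smul_fun (q : K[X]) (a : K) (f : LS K) : MQ q (a • f) = a • MQ q f := by
  funext k; simp [MQ]; ring

lemma MQ_sub_fun (q : K[X]) (f g : LS K) : MQ q (f - g) = MQ q f - MQ q g := by
  funext k; simp [MQ, mul_sub]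

lemma MQ_zero_poly (f : LS K) : MQ (0 : K[X]) f = 0 := by
  funext k; simp [MQ]

/-- forward difference operator on polynomials -/
noncomputable def dD (q : K[X]) : K[X] := q.comp (X + C 1) - q

lemma dD_eval (q : K[X]) (x : K) : (dD q).eval x = q.eval (x + 1) - q.eval x := by
  simp [dD, eval_comp]

lemma dD_zero : dD (0 : K[X]) = 0 := by simp [dD]

lemma dD_natDegree (q : K[X]) : dD q = 0 ∨ (dD q).natDegree + 1 ≤ q.natDegree := by
  rcases eq_or_ne (dD q) 0 with h | h
  · exact Or.inl h
  right
  rcases Nat.eq_zero_or_pos q.natDegree with h0 | hpos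
  · exfalso
    obtain ⟨a, rfl⟩ := Polynomial.natDegree_eq_zero.mp h0
    simp [dD] at h
  have hq0 : q ≠ 0 := fun hh => by simp [hh] at hpos
  have hX : (X + C (1:K)).natDegree = 1 := Polynomial.natDegree_X_add_C 1
  have hcompdeg : (q.comp (X + C 1)).natDegree = q.natDegree := by
    rw [Polynomial.natDegree_comp, hX, mul_one]
  have hlc : (q.comp (X + C 1)).leadingCoeff = q.leadingCoeff := by
    rw [Polynomial.leadingCoeff_comp (by rw [hX]; norm_num)]
    rw [(Polynomial.monic_X_add_C (1:K)).leadingCoeff, one_pow, mul_one]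
  have hcomp0 : q.comp (X + C 1) ≠ 0 := by
    intro hh
    apply hq0
    rw [hh, Polynomial.leadingCoeff_zero] at hlc
    exact Polynomial.leadingCoeff_eq_zero.mp hlc.symm
  have hdeg : (q.comp (X + C 1)).degree = q.degree := by
    rw [Polynomial.degree_eq_natDegree hcomp0, Polynomial.degree_eq_natDegree hq0, hcompdeg]
  have hlt : (dD q).degree < q.degree := by
    have := Polynomial.degree_sub_lt hdeg hcomp0 hlc
    rwa [hdeg] at this
  have := Polynomial.natDegree_lt_natDegree h hlt
  omega

lemma dD_iter_natDegree (t : ℕ) (q : K[X]) :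
    dD^[t] q = 0 ∨ (dD^[t] q).natDegree + t ≤ q.natDegree := by
  induction t generalizing q with
  | zero => right; simp
  | succ t ih =>
    rcases dD_natDegree q with h | h
    · left
      rw [Function.iterate_succ_apply, h]
      clear ih h
      induction t with
      | zero => simp
      | succ t ih2 => rw [Function.iterate_succ_apply, dD_zero]; exact ih2
    · rcases ih (dD q) with h2 | h2
      · left; rwa [Function.iterate_succ_apply]
      · right
        rw [Function.iterate_succ_apply]
        omega

lemma dD_iter_eq_zero {q : K[X]} {t : ℕ} (h : q.natDegree < t) : dD^[t] q = 0 := by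
  rcases dD_iter_natDegree t q with h2 | h2
  · exact h2
  · omega

lemma newton_fwd (j : ℕ) (q : K[X]) (x : K) :
    q.eval (x + j) = ∑ t ∈ Finset.range (j + 1), (j.choose t : K) * (dD^[t] q).eval x := by
  induction j generalizing q with
  | zero => simp
  | succ j ih =>
    have h1 : q.eval (x + (j + 1 : ℕ)) = (dD q).eval (x + j) + q.eval (x + j) := by
      rw [dD_eval]
      push_cast
      ring_nf
    rw [h1, ih q, ih (dD q)]
    rw [Finset.sum_range_succ' (fun t => (((j+1).choose t : ℕ) : K) * (dD^[t] q).eval x) (j+1)]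
    have hsplit : ∀ i ∈ Finset.range (j+1),
        ((((j+1).choose (i+1) : ℕ) : K) * (dD^[i+1] q).eval x)
        = ((j.choose i : ℕ) : K) * (dD^[i] (dD q)).eval x
          + ((j.choose (i+1) : ℕ) : K) * (dD^[i+1] q).eval x := by
      intro i _
      rw [Nat.choose_succ_succ]
      push_cast
      rw [Function.iterate_succ_apply]
      ring
    rw [Finset.sum_congr rfl hsplit, Finset.sum_add_distrib]
    have h4 : (∑ i ∈ Finset.range (j+1), ((j.choose (i+1) : ℕ) : K) * (dD^[i+1] q).eval x)
        + (((j+1).choose 0 : ℕ) : K) * (dD^[0] q).eval x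
        = ∑ t ∈ Finset.range (j+1), ((j.choose t : ℕ) : K) * (dD^[t] q).eval x := by
      rw [Nat.choose_zero_right]
      have e1 := Finset.sum_range_succ' (fun t => ((j.choose t : ℕ) : K) * (dD^[t] q).eval x) (j+1)
      rw [Finset.sum_range_succ] at e1
      rw [Nat.choose_eq_zero_of_lt (Nat.lt_succ_self j)] at e1
      simp only [Nat.cast_zero, zero_mul, add_zero, Nat.choose_zero_right, Nat.cast_one] at e1 ⊢
      linear_combination -e1
    rw [add_assoc, h4]
lemma newton_bwd (j : ℕ) (q : K[X]) (x : K) :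
    q.eval (x - j) = ∑ t ∈ Finset.range (j + 1),
      (-1 : K)^t * (j.choose t : K) * (dD^[t] q).eval (x - t) := by
  induction j generalizing q x with
  | zero => simp
  | succ j ih =>
    have h1 : q.eval (x - ((j:ℕ) + 1 : ℕ)) = q.eval (x - j) - (dD q).eval ((x - 1) - j) := by
      rw [dD_eval]
      push_cast
      ring_nf
    rw [h1, ih q x, ih (dD q) (x - 1)]
    rw [Finset.sum_range_succ' (fun t => (-1 : K)^t * (((j+1).choose t : ℕ) : K)
        * (dD^[t] q).eval (x - t)) (j+1)]
    have hsplit : ∀ i ∈ Finset.range (j+1),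
        ((-1 : K)^(i+1) * (((j+1).choose (i+1) : ℕ) : K) * (dD^[i+1] q).eval (x - (i+1:ℕ)))
        = -((-1 : K)^i * ((j.choose i : ℕ) : K) * (dD^[i] (dD q)).eval ((x-1) - i))
          + (-1 : K)^(i+1) * ((j.choose (i+1) : ℕ) : K) * (dD^[i+1] q).eval (x - (i+1:ℕ)) := by
      intro i _
      rw [Nat.choose_succ_succ]
      have harg : (x - 1) - (i:K) = x - ((i+1 : ℕ) : K) := by push_cast; ring
      rw [harg, Function.iterate_succ_apply]
      push_cast
      ring
    rw [Finset.sum_congr rfl hsplit, Finset.sum_add_distrib]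
    have h4 : (∑ i ∈ Finset.range (j+1),
          (-1 : K)^(i+1) * ((j.choose (i+1) : ℕ) : K) * (dD^[i+1] q).eval (x - (i+1:ℕ)))
        + (-1 : K)^0 * (((j+1).choose 0 : ℕ) : K) * (dD^[0] q).eval (x - (0:ℕ))
        = ∑ t ∈ Finset.range (j+1), (-1 : K)^t * ((j.choose t : ℕ) : K) * (dD^[t] q).eval (x - t) := by
      have e1 := Finset.sum_range_succ' (fun t => (-1 : K)^t * ((j.choose t : ℕ) : K)
        * (dD^[t] q).eval (x - t)) (j+1)
      rw [Finset.sum_range_succ] at e1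
      rw [Nat.choose_eq_zero_of_lt (Nat.lt_succ_self j)] at e1
      simp only [Nat.cast_zero, zero_mul, mul_zero, add_zero, Nat.choose_zero_right,
        Nat.cast_one, pow_zero] at e1 ⊢
      push_cast at e1 ⊢
      linear_combination -e1
    rw [add_assoc, h4]
    have h5 : (∑ i ∈ Finset.range (j+1),
        -((-1 : K)^i * ((j.choose i : ℕ) : K) * (dD^[i] (dD q)).eval ((x-1) - i)))
        = -∑ i ∈ Finset.range (j+1),
            (-1 : K)^i * ((j.choose i : ℕ) : K) * (dD^[i] (dD q)).eval ((x-1) - i) := by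
      rw [Finset.sum_neg_distrib]
    rw [h5]
    ring

lemma newton_fwd_le (q : K[X]) (j : ℕ) (x : K) {T : ℕ} (hT : q.natDegree ≤ T) :
    q.eval (x + j) = ∑ t ∈ Finset.range (T + 1), (j.choose t : K) * (dD^[t] q).eval x := by
  rw [newton_fwd j q x]
  set D := max (j+1) (T+1) with hD
  have h1 : ∑ t ∈ Finset.range (j+1), ((j.choose t : ℕ) : K) * (dD^[t] q).eval x
      = ∑ t ∈ Finset.range D, ((j.choose t : ℕ) : K) * (dD^[t] q).eval x := by
    refine Finset.sum_subset (Finset.range_subset_range.2 (le_max_left _ _)) ?_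
    intro t ht hnt
    simp only [Finset.mem_range, not_lt] at hnt
    rw [Nat.choose_eq_zero_of_lt (by omega), Nat.cast_zero, zero_mul]
  have h2 : ∑ t ∈ Finset.range (T+1), ((j.choose t : ℕ) : K) * (dD^[t] q).eval x
      = ∑ t ∈ Finset.range D, ((j.choose t : ℕ) : K) * (dD^[t] q).eval x := by
    refine Finset.sum_subset (Finset.range_subset_range.2 (le_max_right _ _)) ?_
    intro t ht hnt
    simp only [Finset.mem_range, not_lt] at hnt
    rw [dD_iter_eq_zero (by omega), Polynomial.eval_zero, mul_zero]
  rw [h1, h2]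

lemma newton_bwd_le (q : K[X]) (j : ℕ) (x : K) {T : ℕ} (hT : j ≤ T) :
    q.eval (x - j) = ∑ t ∈ Finset.range (T + 1),
      (-1 : K)^t * (j.choose t : K) * (dD^[t] q).eval (x - t) := by
  rw [newton_bwd j q x]
  refine Finset.sum_subset (Finset.range_subset_range.2 (by omega)) ?_
  intro t ht hnt
  simp only [Finset.mem_range, not_lt] at hnt
  rw [Nat.choose_eq_zero_of_lt (by omega), Nat.cast_zero, mul_zero, zero_mul]

lemma hasseDeriv_eq_zero_of_natDegree_lt {Y : K[X]} {t : ℕ} (h : Y.natDegree < t) :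
    Polynomial.hasseDeriv t Y = 0 := by
  ext n
  rw [Polynomial.hasseDeriv_coeff, Polynomial.coeff_eq_zero_of_natDegree_lt (by omega)]
  simp

lemma coeff_X_pow_mul_hasseDeriv (t : ℕ) (Y : K[X]) (j : ℕ) :
    (X ^ t * Polynomial.hasseDeriv t Y).coeff j = (j.choose t : K) * Y.coeff j := by
  rcases le_or_gt t j with h | h
  · have hj : j = (j - t) + t := by omega
    rw [hj, Polynomial.coeff_X_pow_mul, Polynomial.hasseDeriv_coeff]
  · rw [Polynomial.X_pow_mul, Polynomial.coeff_mul_X_pow', if_neg (by omega),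
      Nat.choose_eq_zero_of_lt h, Nat.cast_zero, zero_mul]

lemma natDegree_X_pow_mul_hasseDeriv_le (t : ℕ) (Y : K[X]) :
    (X ^ t * Polynomial.hasseDeriv t Y).natDegree ≤ Y.natDegree := by
  rcases eq_or_ne (Polynomial.hasseDeriv t Y) 0 with h | h
  · rw [h, mul_zero, Polynomial.natDegree_zero]
    exact Nat.zero_le _
  · have ht : t ≤ Y.natDegree := by
      by_contra hc
      exact h (hasseDeriv_eq_zero_of_natDegree_lt (by omega))
    rw [Polynomial.natDegree_mul (pow_ne_zero _ Polynomial.X_ne_zero) h,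
      Polynomial.natDegree_X_pow]
    have := Polynomial.natDegree_hasseDeriv_le Y t
    omega

lemma comm_MA_MQ (Y q : K[X]) (f : LS K) {T : ℕ} (hT : q.natDegree ≤ T) :
    MA Y (MQ q f) = ∑ t ∈ Finset.range (T + 1),
      MQ (dD^[t] q) (MA (X ^ t * Polynomial.hasseDeriv t Y) f) := by
  funext k
  rw [Finset.sum_apply]
  have hR : ∀ t, MQ (dD^[t] q) (MA (X ^ t * Polynomial.hasseDeriv t Y) f) k
      = ∑ j ∈ Finset.range (Y.natDegree + 1),
          (dD^[t] q).eval (k : K) * ((j.choose t : K) * Y.coeff j * f (k + j)) := by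
    intro t
    rw [MQ, MA_congr_range _ f k (Nat.lt_succ_of_le (natDegree_X_pow_mul_hasseDeriv_le t Y)),
      Finset.mul_sum]
    refine Finset.sum_congr rfl fun j _ => ?_
    rw [coeff_X_pow_mul_hasseDeriv]
  rw [Finset.sum_congr rfl fun t _ => hR t, Finset.sum_comm]
  unfold MA MQ
  refine Finset.sum_congr rfl fun j _ => ?_
  have hcast : ((k + (j:ℕ) : ℤ) : K) = (k : K) + (j : ℕ) := by push_cast; ring
  rw [hcast, newton_fwd_le q j (k : K) hT, Finset.sum_mul, Finset.mul_sum]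
  refine Finset.sum_congr rfl fun t _ => ?_
  ring

lemma comm_MQ_MA (q Y : K[X]) (f : LS K) {T : ℕ} (hT : Y.natDegree ≤ T) :
    MQ q (MA Y f) = ∑ t ∈ Finset.range (T + 1),
      ((-1 : K) ^ t) • MA (X ^ t * Polynomial.hasseDeriv t Y)
        (MQ ((dD^[t] q).comp (X - C (t : K))) f) := by
  funext k
  rw [Finset.sum_apply]
  have hR : ∀ t, ((-1 : K) ^ t • MA (X ^ t * Polynomial.hasseDeriv t Y)
        (MQ ((dD^[t] q).comp (X - C (t : K))) f)) k
      = ∑ j ∈ Finset.range (Y.natDegree + 1),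
          (-1 : K)^t * ((j.choose t : K) * Y.coeff j)
            * (dD^[t] q).eval (((k : K) + (j : ℕ)) - (t : ℕ)) * f (k + j) := by
    intro t
    rw [Pi.smul_apply, MA_congr_range _ _ k (Nat.lt_succ_of_le (natDegree_X_pow_mul_hasseDeriv_le t Y)),
      smul_eq_mul, Finset.mul_sum]
    refine Finset.sum_congr rfl fun j _ => ?_
    rw [coeff_X_pow_mul_hasseDeriv, MQ]
    rw [Polynomial.eval_comp, Polynomial.eval_sub, Polynomial.eval_X, Polynomial.eval_C]
    have hcast : ((k + (j:ℕ) : ℤ) : K) = (k : K) + (j : ℕ) := by push_cast; ring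
    rw [hcast]
    ring
  rw [Finset.sum_congr rfl fun t _ => hR t, Finset.sum_comm]
  unfold MA MQ
  rw [Finset.mul_sum]
  refine Finset.sum_congr rfl fun j hj => ?_
  have hjT : (j : ℕ) ≤ T := by
    simp only [Finset.mem_range] at hj
    omega
  have hnb := newton_bwd_le q j ((k : K) + (j : ℕ)) hjT
  rw [show (k : K) + (j : ℕ) - (j : ℕ) = (k : K) from by ring] at hnb
  rw [hnb, Finset.sum_mul]
  refine Finset.sum_congr rfl fun t _ => ?_
  ring
lemma pow_dvd_iterate_derivative (A : K[X]) :
    ∀ (s e : ℕ) (B : K[X]), s ≤ e → A ^ (e - s) ∣ Polynomial.derivative^[s] (B * A ^ e) := by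
  intro s
  induction s with
  | zero => intro e B _; simpa using Dvd.intro_left B rfl
  | succ s ih =>
    intro e B hse
    have hA : A ^ e = A ^ (e - 1) * A := by
      rw [← pow_succ]
      congr 1
      omega
    have hder : Polynomial.derivative (B * A ^ e)
        = (Polynomial.derivative B * A + C (e : K) * B * Polynomial.derivative A) * A ^ (e - 1) := by
      rw [Polynomial.derivative_mul, Polynomial.derivative_pow, hA]
      ring
    rw [Function.iterate_succ_apply, hder]
    have := ih (e - 1) (Polynomial.derivative B * A + C (e : K) * B * Polynomial.derivative A)
      (by omega)
    rwa [show e - 1 - s = e - (s + 1) from by omega] at this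

variable [CharZero K]

lemma hasseDeriv_eq_inv_factorial_smul (s : ℕ) (Z : K[X]) :
    Polynomial.hasseDeriv s Z = ((s.factorial : K))⁻¹ • Polynomial.derivative^[s] Z := by
  have h1 := congrFun (Polynomial.factorial_smul_hasseDeriv (R := K) s) Z
  rw [LinearMap.smul_apply] at h1
  have h2 : ((s.factorial : K)) • Polynomial.hasseDeriv s Z = Polynomial.derivative^[s] Z := by
    rw [← h1, Nat.cast_smul_eq_nsmul]
  rw [← h2, smul_smul, inv_mul_cancel₀ (by exact_mod_cast Nat.factorial_ne_zero s), one_smul]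

lemma X_pow_mul_hasse_factor (A : K[X]) (s e : ℕ) (B : K[X]) (h : s ≤ e) :
    ∃ Cc : K[X], X ^ s * Polynomial.hasseDeriv s (B * A ^ e) = Cc * A ^ (e - s) := by
  obtain ⟨D, hD⟩ := pow_dvd_iterate_derivative A s e B h
  refine ⟨((s.factorial : K))⁻¹ • (X ^ s * D), ?_⟩
  rw [hasseDeriv_eq_inv_factorial_smul, hD, mul_smul_comm, smul_mul_assoc]
  congr 1
  ring

/-- `P_c(X) = X(X+1)⋯(X+c-1)` -/
noncomputable def Pc (c : ℕ) : K[X] := ∏ l ∈ Finset.range c, (X + C (l : K))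

lemma Pc_monic (c : ℕ) : (Pc (K := K) c).Monic :=
  Polynomial.monic_prod_of_monic _ _ fun l _ => Polynomial.monic_X_add_C _

lemma Pc_natDegree (c : ℕ) : (Pc (K := K) c).natDegree = c := by
  rw [Pc, Polynomial.natDegree_prod _ _ fun l _ => (Polynomial.monic_X_add_C _).ne_zero]
  rw [Finset.sum_congr rfl fun l _ => Polynomial.natDegree_X_add_C ((l:ℕ):K)]
  rw [Finset.sum_const, smul_eq_mul, mul_one, Finset.card_range]

lemma Pc_eval_eq_zero {c l : ℕ} (h : l < c) : (Pc c).eval (-(l : K)) = 0 := by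
  rw [Pc, Polynomial.eval_prod]
  refine Finset.prod_eq_zero (Finset.mem_range.2 h) ?_
  simp

lemma Pc_dvd_of_roots {c : ℕ} {W : K[X]} (h : ∀ l : ℕ, l < c → W.eval (-(l : K)) = 0) :
    Pc c ∣ W := by
  have hP : Pc (K := K) c = ∏ l ∈ Finset.range c, (X - C (-(l : K))) := by
    rw [Pc]
    refine Finset.prod_congr rfl fun l _ => ?_
    rw [map_neg, sub_neg_eq_add]
  rw [hP]
  refine Finset.prod_dvd_of_coprime ?_ ?_
  · have hinj : Function.Injective (fun l : ℕ => -(l : K)) := by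
      intro a b hab
      simp only [neg_inj, Nat.cast_inj] at hab
      exact hab
    exact (Polynomial.pairwise_coprime_X_sub_C hinj).set_pairwise _
  · intro l hl
    exact Polynomial.dvd_iff_isRoot.2 (h l (Finset.mem_range.1 hl))

lemma dD_iter_eval_zero (s : ℕ) (W : K[X]) (x : K)
    (h : ∀ u : ℕ, u ≤ s → W.eval (x + u) = 0) : (dD^[s] W).eval x = 0 := by
  induction s generalizing W x with
  | zero =>
    simpa using h 0 (le_refl 0)
  | succ s ih =>
    rw [Function.iterate_succ_apply]
    refine ih (dD W) x fun u hu => ?_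
    rw [dD_eval]
    have h1 := h (u + 1) (by omega)
    have h2 := h u (by omega)
    push_cast at h1
    rw [show x + (u : K) + 1 = x + ((u : K) + 1) from by ring, h1, h2, sub_zero]

lemma Pc_dvd_comp_dD {N c s : ℕ} (q : K[X]) (hs : s + c ≤ N) :
    Pc c ∣ (dD^[s] (Pc N * q)).comp (X - C (s : K)) := by
  refine Pc_dvd_of_roots fun l hl => ?_
  rw [Polynomial.eval_comp, Polynomial.eval_sub, Polynomial.eval_X, Polynomial.eval_C]
  refine dD_iter_eval_zero s _ _ fun u hu => ?_
  rw [Polynomial.eval_mul]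
  have harg : -(l : K) - (s : ℕ) + (u : ℕ) = -(((l + (s - u) : ℕ) : ℕ) : K) := by
    push_cast [Nat.cast_sub hu]
    ring
  rw [harg, Pc_eval_eq_zero (by omega), zero_mul]

lemma natDegree_comp_X_sub_C (W : K[X]) (a : K) :
    (W.comp (X - C a)).natDegree = W.natDegree := by
  rw [Polynomial.natDegree_comp, Polynomial.natDegree_X_sub_C, mul_one]
lemma sum_range_shift (g : ℕ → K) (a b : ℕ) (h0 : ∀ i, i < a → g i = 0) :
    ∑ i ∈ Finset.range (a + b), g i = ∑ j ∈ Finset.range b, g (a + j) := by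
  induction a generalizing b with
  | zero => simp
  | succ a ih =>
    rw [show a + 1 + b = a + (b + 1) from by omega,
      ih (b + 1) (fun i hi => h0 i (by omega)),
      Finset.sum_range_succ' (fun j => g (a + j)) b]
    rw [show g (a + 0) = 0 from by rw [add_zero]; exact h0 a (by omega), add_zero]
    refine Finset.sum_congr rfl fun j _ => ?_
    rw [show a + (j + 1) = a + 1 + j from by omega]

lemma dz_iter_apply (N : ℕ) (f : LS K) (k : ℤ) :
    dz^[N] f k = (∏ t ∈ Finset.range N, ((t : K) + 1 - (k : K))) * f (k - N) := by
  induction N generalizing k with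
  | zero => simp
  | succ N ih =>
    rw [Function.iterate_succ_apply', dz, ih (k - 1)]
    rw [Finset.prod_range_succ' (fun t => ((t : K) + 1 - ((k : ℤ) : K))) N]
    have hc : ((k - 1 : ℤ) : K) = (k : K) - 1 := by push_cast; ring
    have harg : k - 1 - (N : ℕ) = k - ((N : ℕ) + 1 : ℕ) := by push_cast; ring
    rw [hc, harg]
    have hprod : ∀ t : ℕ, ((t : K) + 1 - ((k : K) - 1)) = (((t + 1 : ℕ) : K) + 1 - (k : K)) := by
      intro t; push_cast; ring
    rw [Finset.prod_congr rfl fun t _ => hprod t]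
    push_cast
    ring

section WithAlpha
variable {m : ℕ} (α : Fin m → K)

/-- `A(X) = ∏ (X - α_i)` -/
noncomputable def Apoly : K[X] := ∏ i, (X - C (α i))

lemma Apoly_monic : (Apoly α).Monic :=
  Polynomial.monic_prod_of_monic _ _ fun i _ => Polynomial.monic_X_sub_C _

lemma Apoly_natDegree : (Apoly α).natDegree = m := by
  rw [Apoly, Polynomial.natDegree_prod _ _ fun i _ => (Polynomial.monic_X_sub_C _).ne_zero]
  simp [Polynomial.natDegree_X_sub_C]

lemma Lop_eq (N : ℕ) (f : LS K) :
    Lop N α f = (((-1 : K) ^ N) * (N.factorial : K)⁻¹) •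
      MA ((Apoly α) ^ N) (MQ (Pc N) f) := by
  have hA0 : (Apoly α) ^ N ≠ 0 := pow_ne_zero _ (Apoly_monic α).ne_zero
  have hprodpow : ∏ i, (X - C (α i)) ^ N = (Apoly α) ^ N := by
    rw [Apoly, Finset.prod_pow]
  have hPdeg : (X ^ N * (Apoly α) ^ N).natDegree = N + N * m := by
    rw [Polynomial.natDegree_mul (pow_ne_zero _ Polynomial.X_ne_zero) hA0,
      Polynomial.natDegree_X_pow, Polynomial.natDegree_pow, Apoly_natDegree]
  funext k
  simp only [Lop, hprodpow, Pi.smul_apply, pmul, hPdeg]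
  have hsplit : N + N * m + 1 = N + (N * m + 1) := by omega
  have hre : ∑ i ∈ Finset.range (N + (N * m + 1)),
        (X ^ N * Apoly α ^ N).coeff i * dz^[N] f (k + (i:ℕ))
      = ∑ j ∈ Finset.range (N * m + 1),
        (X ^ N * Apoly α ^ N).coeff (N + j) * dz^[N] f (k + ((N + j : ℕ):ℕ)) := by
    refine sum_range_shift _ N (N * m + 1) fun i hi => ?_
    rw [Polynomial.X_pow_mul, Polynomial.coeff_mul_X_pow', if_neg (by omega), zero_mul]
  rw [hsplit, hre]
  simp only [MA, MQ, Polynomial.natDegree_pow, Apoly_natDegree]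
  rw [smul_eq_mul, smul_eq_mul, Finset.mul_sum, Finset.mul_sum]
  refine Finset.sum_congr rfl fun j _ => ?_
  have hcoe : (X ^ N * Apoly α ^ N).coeff (N + j) = (Apoly α ^ N).coeff j := by
    rw [Polynomial.X_pow_mul, Polynomial.coeff_mul_X_pow', if_pos (by omega)]
    congr 1
    omega
  rw [hcoe]
  rw [dz_iter_apply]
  have harg : k + ((N + j : ℕ) : ℤ) - (N : ℕ) = k + (j : ℕ) := by push_cast; ring
  rw [harg]
  have hPc : (∏ t ∈ Finset.range N, ((t : K) + 1 - ((k + ((N + j : ℕ) : ℤ) : ℤ) : K)))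
      = (-1 : K) ^ N * (Pc N).eval (((k + (j : ℕ) : ℤ)) : K) := by
    rw [Pc, Polynomial.eval_prod]
    rw [show ((-1 : K)) ^ N = ∏ t ∈ Finset.range N, (-1 : K) from by
      rw [Finset.prod_const, Finset.card_range]]
    rw [← Finset.prod_mul_distrib]
    rw [← Finset.prod_range_reflect (fun t => ((t : K) + 1 - ((k + ((N + j : ℕ) : ℤ) : ℤ) : K))) N]
    refine Finset.prod_congr rfl fun t ht => ?_
    simp only [Finset.mem_range] at ht
    rw [Polynomial.eval_add, Polynomial.eval_X, Polynomial.eval_C]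
    have h1 : (N - 1 - t) + (t + 1) = N := by omega
    have h2 : ((N - 1 - t : ℕ) : K) = (N : K) - (t : K) - 1 := by
      have := congrArg (Nat.cast : ℕ → K) h1
      push_cast at this
      linear_combination this
    rw [h2]
    push_cast
    ring
  rw [hPc]
  ring
end WithAlpha
lemma MA_zero_fun (Y : K[X]) : MA Y (0 : LS K) = 0 := by
  funext k; simp [MA]

lemma MQ_zero_fun (q : K[X]) : MQ q (0 : LS K) = 0 := by
  funext k; simp [MQ]

lemma MQ_one (f : LS K) : MQ (1 : K[X]) f = f := by
  funext k; simp [MQ]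

lemma MA_finset_sum {ι : Type*} (Y : K[X]) (S : Finset ι) (g : ι → LS K) :
    MA Y (∑ i ∈ S, g i) = ∑ i ∈ S, MA Y (g i) := by
  funext k
  rw [Finset.sum_apply]
  unfold MA
  have h1 : ∀ j ∈ Finset.range (Y.natDegree + 1),
      Y.coeff j * (∑ i ∈ S, g i) (k + j) = ∑ i ∈ S, Y.coeff j * g i (k + j) := by
    intro j _
    rw [Finset.sum_apply, Finset.mul_sum]
  rw [Finset.sum_congr rfl h1, Finset.sum_comm]

section Step
variable {m : ℕ} (α : Fin m → K) (n : ℕ)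

/-- the invariant class of "states" at level `c` over the series `h` -/
def StateSet (c : ℕ) (h : LS K) : Set (LS K) :=
  {w | ∃ q B : K[X], ∃ e : ℕ, q.natDegree ≤ e ∧ B.natDegree + m * e ≤ c * (n - 1) ∧
        w = MQ q (MA (B * (Apoly α) ^ e) h)}

lemma step_mem (c : ℕ) (hn : 1 ≤ n) (h : LS K) (w : LS K)
    (hw : w ∈ StateSet α n c h) :
    MA ((Apoly α) ^ (n * c)) (MQ (Pc (n * c)) w) ∈
      Submodule.span K (StateSet α n ((m + 1) * c)
        (MA ((Apoly α) ^ c) (MQ (Pc c) h))) := by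
  obtain ⟨q, B, e, hq, hB, rfl⟩ := hw
  obtain ⟨n', rfl⟩ : ∃ n'', n = n'' + 1 := ⟨n - 1, by omega⟩
  simp only [Nat.add_sub_cancel] at hB ⊢
  have hA0 : (Apoly α) ≠ 0 := (Apoly_monic α).ne_zero
  have hAdeg : (Apoly α).natDegree = m := Apoly_natDegree α
  have hYdeg : (B * (Apoly α) ^ e).natDegree ≤ B.natDegree + m * e := by
    calc (B * (Apoly α) ^ e).natDegree ≤ B.natDegree + ((Apoly α) ^ e).natDegree :=
        Polynomial.natDegree_mul_le
    _ = B.natDegree + m * e := by rw [Polynomial.natDegree_pow, hAdeg]; ring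
  have hT0 : (B * (Apoly α) ^ e).natDegree ≤ c * n' := le_trans hYdeg hB
  have hNc : c * n' + c = (n' + 1) * c := by ring
  rw [← MQ_mul]
  rw [comm_MQ_MA (Pc ((n' + 1) * c) * q) (B * (Apoly α) ^ e) h
    (le_refl (B * (Apoly α) ^ e).natDegree)]
  rw [MA_finset_sum]
  refine Submodule.sum_mem _ fun s hs => ?_
  rw [MA_smul_fun]
  refine Submodule.smul_mem _ _ ?_
  rw [← MA_mul]
  simp only [Finset.mem_range] at hs
  have hsY : s ≤ (B * (Apoly α) ^ e).natDegree := by omega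
  have hsN : s + c ≤ (n' + 1) * c := by
    rw [← hNc]
    have : s ≤ c * n' := le_trans hsY hT0
    omega
  obtain ⟨R, hR⟩ := Pc_dvd_comp_dD (K := K) q hsN
  rcases eq_or_ne R 0 with rfl | hR0
  · rw [mul_zero] at hR
    rw [hR, MQ_zero_poly, MA_zero_fun]
    exact Submodule.zero_mem _
  -- extract A-power from the hasse derivative of Y
  rcases eq_or_ne (X ^ s * Polynomial.hasseDeriv s (B * (Apoly α) ^ e)) 0 with hCc0 | hCc0
  · rw [hCc0, mul_zero, MA_zero_poly]
    exact Submodule.zero_mem _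
  obtain ⟨Cc, hCc⟩ : ∃ Cc : K[X],
      X ^ s * Polynomial.hasseDeriv s (B * (Apoly α) ^ e)
        = Cc * (Apoly α) ^ (e - min s e) := by
    rcases le_total s e with hse | hes
    · rw [min_eq_left hse]
      exact X_pow_mul_hasse_factor (Apoly α) s e B hse
    · rw [min_eq_right hes, Nat.sub_self, pow_zero]
      exact ⟨X ^ s * Polynomial.hasseDeriv s (B * (Apoly α) ^ e), (mul_one _).symm⟩
  have hCcne : Cc ≠ 0 := by
    intro hzero
    rw [hzero, zero_mul] at hCc
    exact hCc0 hCc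
  -- degree bookkeeping for R
  have hWsne : (dD^[s] (Pc ((n' + 1) * c) * q)).comp (X - C (s : K)) ≠ 0 := by
    rw [hR]
    exact mul_ne_zero (Pc_monic c).ne_zero hR0
  have hWsdeg : R.natDegree + c + s ≤ (n' + 1) * c + q.natDegree := by
    have h1 : ((dD^[s] (Pc ((n' + 1) * c) * q)).comp (X - C (s : K))).natDegree
        = c + R.natDegree := by
      rw [hR, Polynomial.natDegree_mul (Pc_monic c).ne_zero hR0, Pc_natDegree]
    have h2 : (dD^[s] (Pc ((n' + 1) * c) * q)).natDegree + s
        ≤ (n' + 1) * c + q.natDegree := by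
      rcases dD_iter_natDegree s (Pc ((n' + 1) * c) * q) with hz | hz
      · exfalso
        apply hWsne
        rw [hz]
        simp
      · refine le_trans hz ?_
        calc (Pc ((n' + 1) * c) * q).natDegree
            ≤ (Pc (K := K) ((n' + 1) * c)).natDegree + q.natDegree :=
              Polynomial.natDegree_mul_le
        _ = (n' + 1) * c + q.natDegree := by rw [Pc_natDegree]
    rw [natDegree_comp_X_sub_C] at h1
    omega
  -- expand with the conversion relation
  rw [hR, mul_comm (Pc c) R, MQ_mul]
  rw [hCc, mul_comm Cc ((Apoly α) ^ (e - min s e)), ← mul_assoc, ← pow_add]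
  rw [comm_MA_MQ ((Apoly α) ^ ((n' + 1) * c + (e - min s e)) * Cc) R (MQ (Pc c) h)
    (le_refl R.natDegree)]
  refine Submodule.sum_mem _ fun t ht => ?_
  simp only [Finset.mem_range] at ht
  have htR : t ≤ R.natDegree := by omega
  have htc : t + c ≤ (n' + 1) * c + (e - min s e) := by
    obtain ⟨NN, hNN⟩ : ∃ x, (n' + 1) * c = x := ⟨_, rfl⟩
    rw [hNN] at hWsdeg ⊢
    omega
  have hte' : t ≤ (n' + 1) * c + (e - min s e) := by omega
  rw [mul_comm ((Apoly α) ^ ((n' + 1) * c + (e - min s e))) Cc]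
  obtain ⟨D2, hD2⟩ := X_pow_mul_hasse_factor (Apoly α) t ((n' + 1) * c + (e - min s e)) Cc hte'
  rw [hD2]
  rcases eq_or_ne D2 0 with rfl | hD20
  · rw [zero_mul, MA_zero_poly, MQ_zero_fun]
    exact Submodule.zero_mem _
  have hsplit : (n' + 1) * c + (e - min s e) - t = ((n' + 1) * c + (e - min s e) - t - c) + c := by
    obtain ⟨NN, hNN⟩ : ∃ x, (n' + 1) * c = x := ⟨_, rfl⟩
    rw [hNN] at htc ⊢
    omega
  rw [hsplit, pow_add, ← mul_assoc, MA_mul]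
  -- membership in the new state set
  refine Submodule.subset_span
    ⟨dD^[t] R, D2, (n' + 1) * c + (e - min s e) - t - c, ?_, ?_, rfl⟩
  · rcases dD_iter_natDegree t R with hz | hz
    · rw [hz]
      simp
    · obtain ⟨NN, hNN⟩ : ∃ x, (n' + 1) * c = x := ⟨_, rfl⟩
      rw [hNN] at hWsdeg ⊢
      omega
  · -- the degree bound at the next level
    have hE1 : D2.natDegree + ((n' + 1) * c + (e - min s e) - t) * m
        = (X ^ t * Polynomial.hasseDeriv t
            (Cc * (Apoly α) ^ ((n' + 1) * c + (e - min s e)))).natDegree := by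
      rw [hD2, Polynomial.natDegree_mul hD20 (pow_ne_zero _ hA0),
        Polynomial.natDegree_pow, hAdeg]
    have hE1' := natDegree_X_pow_mul_hasseDeriv_le t
      (Cc * (Apoly α) ^ ((n' + 1) * c + (e - min s e)))
    have hE2 : (Cc * (Apoly α) ^ ((n' + 1) * c + (e - min s e))).natDegree
        = Cc.natDegree + ((n' + 1) * c + (e - min s e)) * m := by
      rw [Polynomial.natDegree_mul hCcne (pow_ne_zero _ hA0),
        Polynomial.natDegree_pow, hAdeg]
    have hE3 : Cc.natDegree + (e - min s e) * m ≤ B.natDegree + m * e := by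
      have hL : (Cc * (Apoly α) ^ (e - min s e)).natDegree
          = Cc.natDegree + (e - min s e) * m := by
        rw [Polynomial.natDegree_mul hCcne (pow_ne_zero _ hA0),
          Polynomial.natDegree_pow, hAdeg]
      rw [← hL, ← hCc]
      exact le_trans (natDegree_X_pow_mul_hasseDeriv_le s (B * (Apoly α) ^ e)) hYdeg
    have gm1 : ((n' + 1) * c + (e - min s e) - t) * m
        = ((n' + 1) * c + (e - min s e) - t - c) * m + c * m := by
      conv_lhs => rw [hsplit]
      ring
    have gm2 : ((n' + 1) * c + (e - min s e)) * m
        = (n' + 1) * c * m + (e - min s e) * m := by ring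
    have gR : (m + 1) * c * n' + c * m = c * n' + (n' + 1) * c * m := by ring
    have gc : m * ((n' + 1) * c + (e - min s e) - t - c)
        = ((n' + 1) * c + (e - min s e) - t - c) * m := mul_comm _ _
    rw [gc]
    simp only [Nat.add_sub_cancel]
    linarith [hE1, hE1', hE2, hE3, gm1, gm2, gR, hB]
end Step
section Chain
variable {m : ℕ} (α : Fin m → K) (n : ℕ)

lemma step_span (c : ℕ) (hn : 1 ≤ n) (h : LS K) (v : LS K)
    (hv : v ∈ Submodule.span K (StateSet α n c h)) :
    MA ((Apoly α) ^ (n * c)) (MQ (Pc (n * c)) v) ∈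
      Submodule.span K (StateSet α n ((m + 1) * c)
        (MA ((Apoly α) ^ c) (MQ (Pc c) h))) := by
  induction hv using Submodule.span_induction with
  | mem w hw => exact step_mem α n c hn h w hw
  | zero =>
    rw [MQ_zero_fun, MA_zero_fun]
    exact Submodule.zero_mem _
  | add x y _ _ hx hy =>
    rw [MQ_add_fun, MA_add_fun]
    exact Submodule.add_mem _ hx hy
  | smul a x _ hx =>
    rw [MQ_smul_fun, MA_smul_fun]
    exact Submodule.smul_mem _ a hx

/-- the scalar in `L_N = kap N · A(σ)^N P_N(δ)` -/
noncomputable def kap (N : ℕ) : K := (-1 : K) ^ N * (N.factorial : K)⁻¹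

lemma kap_ne_zero (N : ℕ) : kap (K := K) N ≠ 0 := by
  apply mul_ne_zero
  · exact pow_ne_zero _ (by norm_num)
  · exact inv_ne_zero (by exact_mod_cast Nat.factorial_ne_zero N)

/-- the sequence `h_i` (normalized `π`-projections of the partial compositions) -/
noncomputable def hseq (f : LS K) : ℕ → LS K
  | 0 => f
  | i + 1 => MA ((Apoly α) ^ ((m + 1) ^ i)) (MQ (Pc ((m + 1) ^ i)) (hseq f i))

/-- the sequence of partial compositions for `R_n` (normalized) -/
noncomputable def Rseq (g : LS K) : ℕ → LS K
  | 0 => g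
  | i + 1 => MA ((Apoly α) ^ (n * (m + 1) ^ i)) (MQ (Pc (n * (m + 1) ^ i)) (Rseq g i))

lemma Lcomp_eq (f : LS K) (ρ : ℕ) :
    Lcomp α ρ f = (∏ i ∈ Finset.range ρ, kap (K := K) ((m + 1) ^ i)) • hseq α f ρ := by
  induction ρ with
  | zero => simp [Lcomp, hseq]
  | succ ρ ih =>
    show Lop ((m + 1) ^ ρ) α (Lcomp α ρ f) = _
    rw [ih, Lop_eq α ((m + 1) ^ ρ) _, MQ_smul_fun, MA_smul_fun, smul_smul,
      Finset.prod_range_succ]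
    rw [show hseq α f (ρ + 1)
      = MA ((Apoly α) ^ ((m + 1) ^ ρ)) (MQ (Pc ((m + 1) ^ ρ)) (hseq α f ρ)) from rfl]
    rw [kap]
    congr 1
    ring

lemma Rcomp_eq (g : LS K) (ρ : ℕ) :
    Rcomp α n ρ g = (∏ i ∈ Finset.range ρ, kap (K := K) ((m + 1) ^ i * n)) • Rseq α n g ρ := by
  induction ρ with
  | zero => simp [Rcomp, Rseq]
  | succ ρ ih =>
    show Lop ((m + 1) ^ ρ * n) α (Rcomp α n ρ g) = _
    rw [ih, Lop_eq α ((m + 1) ^ ρ * n) _, MQ_smul_fun, MA_smul_fun, smul_smul,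
      Finset.prod_range_succ]
    rw [show Rseq α n g (ρ + 1)
      = MA ((Apoly α) ^ (n * (m + 1) ^ ρ)) (MQ (Pc (n * (m + 1) ^ ρ)) (Rseq α n g ρ)) from rfl]
    rw [show (m + 1) ^ ρ * n = n * (m + 1) ^ ρ from mul_comm _ _]
    rw [kap]
    congr 1
    ring

lemma Rseq_mem (f : LS K) (hn : 1 ≤ n) (k : ℕ) (hk : k < n) :
    ∀ i : ℕ, Rseq α n (MA (X ^ k) f) i ∈
      Submodule.span K (StateSet α n ((m + 1) ^ i) (hseq α f i)) := by
  intro i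
  induction i with
  | zero =>
    refine Submodule.subset_span ⟨1, X ^ k, 0, by simp, ?_, ?_⟩
    · simp only [Polynomial.natDegree_X_pow, pow_zero, one_mul, Nat.mul_zero, Nat.add_zero]
      omega
    · rw [pow_zero, mul_one, MQ_one]
      rfl
  | succ i ih =>
    have hstep := step_span α n ((m + 1) ^ i) hn (hseq α f i) _ ih
    rw [show Rseq α n (MA (X ^ k) f) (i + 1)
      = MA ((Apoly α) ^ (n * (m + 1) ^ i))
          (MQ (Pc (n * (m + 1) ^ i)) (Rseq α n (MA (X ^ k) f) i)) from rfl]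
    rw [show ((m + 1) : ℕ) ^ (i + 1) = (m + 1) * (m + 1) ^ i from pow_succ' _ _]
    exact hstep

lemma van_of_mem_span (c : ℕ) (h : LS K) (hvan : ∀ k : ℤ, 1 ≤ k → h k = 0)
    (v : LS K) (hv : v ∈ Submodule.span K (StateSet α n c h)) :
    ∀ k : ℤ, 1 ≤ k → v k = 0 := by
  induction hv using Submodule.span_induction with
  | mem w hw =>
    obtain ⟨q, B, e, _, _, rfl⟩ := hw
    intro k hk
    rw [MQ, MA]
    rw [Finset.sum_eq_zero fun j _ => by
      rw [hvan (k + j) (by omega), mul_zero]]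
    rw [mul_zero]
  | zero => intro k hk; rfl
  | add x y _ _ hx hy =>
    intro k hk
    rw [Pi.add_apply, hx k hk, hy k hk, add_zero]
  | smul a x _ hx =>
    intro k hk
    rw [Pi.smul_apply, hx k hk, smul_zero]

end Chain
section IsPolStuff

lemma isPol_iff (v : LS K) :
    IsPol v ↔ ((∀ k : ℤ, 1 ≤ k → v k = 0) ∧ ∃ D : ℕ, ∀ k : ℤ, k + D < 0 → v k = 0) := by
  constructor
  · rintro ⟨P, rfl⟩
    constructor
    · intro k hk
      show (if k ≤ 0 then P.coeff (-k).toNat else 0) = 0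
      rw [if_neg (by omega)]
    · refine ⟨P.natDegree, fun k hk => ?_⟩
      show (if k ≤ 0 then P.coeff (-k).toNat else 0) = 0
      rw [if_pos (by omega)]
      apply Polynomial.coeff_eq_zero_of_natDegree_lt
      omega
  · rintro ⟨hvan, D, hD⟩
    refine ⟨∑ j ∈ Finset.range (D + 1), Polynomial.monomial j (v (-(j : ℤ))), ?_⟩
    funext k
    show v k = if k ≤ 0 then _ else 0
    rcases le_or_gt k 0 with hk | hk
    · rw [if_pos hk, Polynomial.finset_sum_coeff]
      have hco : ∀ j ∈ Finset.range (D + 1),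
          (Polynomial.monomial j (v (-(j : ℤ)))).coeff (-k).toNat
            = if j = (-k).toNat then v (-(j : ℤ)) else 0 := by
        intro j _
        rw [Polynomial.coeff_monomial]
      rw [Finset.sum_congr rfl hco,
        Finset.sum_ite_eq' (Finset.range (D + 1)) ((-k).toNat) (fun j => v (-(j : ℤ)))]
      by_cases hmem : (-k).toNat ∈ Finset.range (D + 1)
      · rw [if_pos hmem]
        congr 1
        simp only [Finset.mem_range] at hmem
        omega
      · rw [if_neg hmem]
        simp only [Finset.mem_range, not_lt] at hmem
        exact hD k (by omega)
    · rw [if_neg (by omega)]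
      exact hvan k (by omega)

lemma isPol_zero : IsPol (0 : LS K) := by
  rw [isPol_iff]
  exact ⟨fun k _ => rfl, 0, fun k _ => rfl⟩

lemma isPol_add {u v : LS K} (hu : IsPol u) (hv : IsPol v) : IsPol (u + v) := by
  rw [isPol_iff] at hu hv ⊢
  obtain ⟨h1, D1, hD1⟩ := hu
  obtain ⟨h2, D2, hD2⟩ := hv
  refine ⟨fun k hk => by rw [Pi.add_apply, h1 k hk, h2 k hk, add_zero],
    max D1 D2, fun k hk => ?_⟩
  rw [Pi.add_apply, hD1 k (by omega), hD2 k (by omega), add_zero]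

lemma isPol_smul {u : LS K} (a : K) (hu : IsPol u) : IsPol (a • u) := by
  rw [isPol_iff] at hu ⊢
  obtain ⟨h1, D1, hD1⟩ := hu
  exact ⟨fun k hk => by rw [Pi.smul_apply, h1 k hk, smul_zero],
    D1, fun k hk => by rw [Pi.smul_apply, hD1 k hk, smul_zero]⟩

lemma isPol_sub {u v : LS K} (hu : IsPol u) (hv : IsPol v) : IsPol (u - v) := by
  rw [isPol_iff] at hu hv ⊢
  obtain ⟨h1, D1, hD1⟩ := hu
  obtain ⟨h2, D2, hD2⟩ := hv
  refine ⟨fun k hk => by rw [Pi.sub_apply, h1 k hk, h2 k hk, sub_zero],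
    max D1 D2, fun k hk => ?_⟩
  rw [Pi.sub_apply, hD1 k (by omega), hD2 k (by omega), sub_zero]

lemma isPol_MA (Y : K[X]) {v : LS K} (hv : IsPol v) : IsPol (MA Y v) := by
  rw [isPol_iff] at hv ⊢
  obtain ⟨h1, D1, hD1⟩ := hv
  constructor
  · intro k hk
    rw [MA]
    exact Finset.sum_eq_zero fun j _ => by rw [h1 (k + j) (by omega), mul_zero]
  · refine ⟨D1 + Y.natDegree, fun k hk => ?_⟩
    rw [MA]
    refine Finset.sum_eq_zero fun j hj => ?_
    simp only [Finset.mem_range] at hj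
    rw [hD1 (k + j) (by omega), mul_zero]

lemma isPol_MQ (q : K[X]) {v : LS K} (hv : IsPol v) : IsPol (MQ q v) := by
  rw [isPol_iff] at hv ⊢
  obtain ⟨h1, D1, hD1⟩ := hv
  exact ⟨fun k hk => by rw [MQ, h1 k hk, mul_zero],
    D1, fun k hk => by rw [MQ, hD1 k hk, mul_zero]⟩

variable {m : ℕ} (α : Fin m → K) (n : ℕ)

lemma isPol_Rseq {v : LS K} (hv : IsPol v) : ∀ i, IsPol (Rseq α n v i) := by
  intro i
  induction i with
  | zero => exact hv
  | succ i ih => exact isPol_MA _ (isPol_MQ _ ih)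

lemma Rseq_zero : ∀ i, Rseq α n (0 : LS K) i = 0 := by
  intro i
  induction i with
  | zero => rfl
  | succ i ih =>
    show MA _ (MQ _ (Rseq α n (0 : LS K) i)) = 0
    rw [ih, MQ_zero_fun, MA_zero_fun]

lemma Rseq_add (x y : LS K) : ∀ i, Rseq α n (x + y) i = Rseq α n x i + Rseq α n y i := by
  intro i
  induction i with
  | zero => rfl
  | succ i ih =>
    show MA _ (MQ _ (Rseq α n (x + y) i)) = _
    rw [ih, MQ_add_fun, MA_add_fun]
    rfl

lemma Rseq_smul (a : K) (x : LS K) : ∀ i, Rseq α n (a • x) i = a • Rseq α n x i := by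
  intro i
  induction i with
  | zero => rfl
  | succ i ih =>
    show MA _ (MQ _ (Rseq α n (a • x) i)) = _
    rw [ih, MQ_smul_fun, MA_smul_fun]
    rfl

lemma Rseq_sub (x y : LS K) (i : ℕ) : Rseq α n (x - y) i = Rseq α n x i - Rseq α n y i := by
  have h1 : x - y = x + (-1 : K) • y := by
    funext k
    simp
    ring
  rw [h1, Rseq_add, Rseq_smul]
  funext k
  simp
  ring

lemma Rseq_bb {v : LS K} (D : ℕ) (hv : ∀ k : ℤ, k + D < 0 → v k = 0) :
    ∀ i, ∃ D' : ℕ, ∀ k : ℤ, k + D' < 0 → Rseq α n v i k = 0 := by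
  intro i
  induction i with
  | zero => exact ⟨D, hv⟩
  | succ i ih =>
    obtain ⟨D', hD'⟩ := ih
    refine ⟨D' + ((Apoly α) ^ (n * (m + 1) ^ i)).natDegree, fun k hk => ?_⟩
    show MA _ (MQ _ (Rseq α n v i)) k = 0
    rw [MA]
    refine Finset.sum_eq_zero fun j hj => ?_
    simp only [Finset.mem_range] at hj
    rw [MQ, hD' (k + j) (by omega), mul_zero, mul_zero]

lemma zmul_iter_apply (k : ℕ) (f : LS K) (k' : ℤ) : zmul^[k] f k' = f (k' + k) := by
  induction k generalizing f with
  | zero => simp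
  | succ k ih =>
    rw [Function.iterate_succ_apply, ih (zmul f)]
    show f (k' + k + 1) = f (k' + ((k + 1 : ℕ) : ℤ))
    congr 1
    push_cast
    ring

lemma zmul_iter_eq_MA (k : ℕ) (f : LS K) : zmul^[k] f = MA (X ^ k) f := by
  funext k'
  rw [zmul_iter_apply, MA, Polynomial.natDegree_X_pow]
  rw [Finset.sum_congr rfl fun j _ => by
    rw [Polynomial.coeff_X_pow, boole_mul]]
  rw [Finset.sum_ite_eq' (Finset.range (k + 1)) k (fun j => f (k' + j))]
  rw [if_pos (Finset.self_mem_range_succ k)]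

end IsPolStuff
end S14
/-- Proposition 7.2 (iii). In the multiple polylogarithm setup, the
operator R_n = L_{(m+1)^{r−1}n}⋯L_{(m+1)n}·L_n belongs to I_n(L):
R_n·g ∈ K[z] for every g ∈ V_n(L). -/
theorem stmt_14 {K : Type*} [Field K] [CharZero K] (m r : ℕ) (hm : 1 ≤ m) (hr : 1 ≤ r)
    (α : Fin m → K) (hα0 : ∀ i, α i ≠ 0) (hαinj : Function.Injective α)
    (n : ℕ) (hn : 1 ≤ n) :
    ∀ g ∈ VnA (Lcomp α r) n, IsPol (Rcomp α n r g) := by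
  intro g hg
  have hgen : ∀ g' ∈ {g : LS K | ∃ k < n, ∃ f ∈ V1A (Lcomp α r), g = piProj (zmul^[k] f)},
      IsPol (Rcomp α n r g') := by
    rintro g' ⟨k, hk, f, hfV, rfl⟩
    obtain ⟨htail, hpol⟩ := hfV
    have hw0 : zmul^[k] f = S14.MA (X ^ k) f := S14.zmul_iter_eq_MA k f
    -- the polynomial discrepancy between `π(z^k f)` and `z^k f`
    have hp0pol : IsPol (S14.MA (X ^ k) f - piProj (zmul^[k] f)) := by
      rw [S14.isPol_iff]
      constructor
      · intro k' hk'
        show S14.MA (X ^ k) f k' - piProj (zmul^[k] f) k' = 0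
        rw [piProj, ← hw0]
        simp only [if_pos hk']
        exact sub_self _
      · refine ⟨k, fun k' hk' => ?_⟩
        show S14.MA (X ^ k) f k' - piProj (zmul^[k] f) k' = 0
        rw [piProj, ← hw0, S14.zmul_iter_apply]
        simp only [if_neg (by omega : ¬ (1:ℤ) ≤ k')]
        rw [htail (k' + k) (by omega), sub_zero]
    have hgeq : piProj (zmul^[k] f)
        = S14.MA (X ^ k) f - (S14.MA (X ^ k) f - piProj (zmul^[k] f)) := by
      funext k'
      simp
    -- vanishing of `hseq f r` beyond degree 0
    have hSL : (∏ i ∈ Finset.range r, S14.kap (K := K) ((m + 1) ^ i)) ≠ 0 :=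
      Finset.prod_ne_zero_iff.2 fun i _ => S14.kap_ne_zero _
    have hvanL : ∀ k' : ℤ, 1 ≤ k' → Lcomp α r f k' = 0 := ((S14.isPol_iff _).1 hpol).1
    have hvanh : ∀ k' : ℤ, 1 ≤ k' → S14.hseq α f r k' = 0 := by
      intro k' hk'
      have h1 := hvanL k' hk'
      rw [S14.Lcomp_eq α f r, Pi.smul_apply, smul_eq_mul] at h1
      exact (mul_eq_zero.1 h1).resolve_left hSL
    have hvanR := S14.van_of_mem_span α n ((m + 1) ^ r) (S14.hseq α f r) hvanh _
      (S14.Rseq_mem α n f hn k hk r)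
    have hbb0 : ∀ k' : ℤ, k' + (k : ℕ) < 0 → S14.MA (X ^ k) f k' = 0 := by
      intro k' hk'
      rw [← hw0, S14.zmul_iter_apply]
      exact htail (k' + k) (by omega)
    have hw0pol : IsPol (Rcomp α n r (S14.MA (X ^ k) f)) := by
      rw [S14.Rcomp_eq]
      apply S14.isPol_smul
      rw [S14.isPol_iff]
      exact ⟨hvanR, S14.Rseq_bb α n k hbb0 r⟩
    have hp0R : IsPol (Rcomp α n r (S14.MA (X ^ k) f - piProj (zmul^[k] f))) := by
      rw [S14.Rcomp_eq]
      exact S14.isPol_smul _ (S14.isPol_Rseq α n hp0pol r)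
    rw [hgeq]
    have hsub : Rcomp α n r (S14.MA (X ^ k) f - (S14.MA (X ^ k) f - piProj (zmul^[k] f)))
        = Rcomp α n r (S14.MA (X ^ k) f)
          - Rcomp α n r (S14.MA (X ^ k) f - piProj (zmul^[k] f)) := by
      rw [S14.Rcomp_eq, S14.Rcomp_eq, S14.Rcomp_eq, S14.Rseq_sub, smul_sub]
    rw [hsub]
    exact S14.isPol_sub hw0pol hp0R
  unfold VnA at hg
  induction hg using Submodule.span_induction with
  | mem w hw => exact hgen w hw
  | zero =>
    have h0 : Rcomp α n r (0 : LS K) = 0 := by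
      rw [S14.Rcomp_eq, S14.Rseq_zero, smul_zero]
    rw [h0]
    exact S14.isPol_zero
  | add x y _ _ hx hy =>
    have hadd : Rcomp α n r (x + y) = Rcomp α n r x + Rcomp α n r y := by
      rw [S14.Rcomp_eq, S14.Rcomp_eq, S14.Rcomp_eq, S14.Rseq_add, smul_add]
    rw [hadd]
    exact S14.isPol_add hx hy
  | smul a x _ hx =>
    have hsmul : Rcomp α n r (a • x) = a • Rcomp α n r x := by
      rw [S14.Rcomp_eq, S14.Rcomp_eq, S14.Rseq_smul, smul_comm]
    rw [hsmul]
    exact S14.isPol_smul a hx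
end

section
/- Let m and n be positive integers. Consider the differential operators L_m = (z(z−1)∂_z)^m ∈ ℚ[z,∂_z] (the m-fold composition of the operator f ↦ z(z−1)f′) and R_n = (1/(n!)^m)·(z^n(z−1)^n ∂_z^n)^m ∈ ℚ[z,∂_z] (the m-fold composition of f ↦ z^n(z−1)^n f^{(n)}, divided by (n!)^m). Then R_n belongs to the left ideal I_n(L_m); that is, R_n·g ∈ ℚ[z] for every g ∈ V_n(L_m). -/
open Polynomial

variable {K : Type*} [Field K]

namespace S19
open Finset

abbrev Sq := ℤ → ℚ

/-- iterated harmonic-type numbers: `Naux (j+1) l = ∑_{i=1}^{l-1} Naux j i / i`. -/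
def Naux : ℕ → ℕ → ℚ
  | 0, _ => 1
  | _+1, 0 => 0
  | j+1, l+1 => Naux (j+1) l + Naux j l / (l : ℚ)

/-- the sequences `H j l = N_j(l)/l` (zero for negative level `j`). -/
def HH (s : ℤ) (x : ℤ) : ℚ := if 0 ≤ s then Naux s.toNat x.toNat / (x : ℚ) else 0

lemma HH_neg {s : ℤ} (hs : s < 0) (x : ℤ) : HH s x = 0 := by
  simp [HH, not_le.2 hs]

lemma Naux_zero (l : ℕ) : Naux 0 l = 1 := by
  cases l <;> simp [Naux]

lemma HH_step (s x : ℤ) (hx : 1 ≤ x) :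
    -(x : ℚ) * HH s x + ((x : ℚ) + 1) * HH s (x + 1) = HH (s - 1) x := by
  have hx0 : (x : ℚ) ≠ 0 := by exact_mod_cast (by omega : x ≠ 0)
  have hx1' : ((x + 1 : ℤ) : ℚ) ≠ 0 := by exact_mod_cast (by omega : x + 1 ≠ 0)
  have hc : ((x + 1 : ℤ) : ℚ) = (x : ℚ) + 1 := by push_cast; ring
  have hx1 : (x : ℚ) + 1 ≠ 0 := by rw [← hc]; exact hx1'
  rcases lt_trichotomy s 0 with hs | hs | hs
  · rw [HH_neg hs x, HH_neg hs (x+1), HH_neg (show s - 1 < 0 by omega) x]; ring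
  · subst hs
    have e0 : ∀ y : ℤ, HH 0 y = 1 / (y : ℚ) := by
      intro y; simp only [HH, le_refl, if_pos, Int.toNat_zero, Naux_zero]
    rw [e0, e0, HH_neg (show (0:ℤ) - 1 < 0 by norm_num) x, hc]
    field_simp
    ring
  · -- s ≥ 1
    obtain ⟨j, hj⟩ : ∃ j : ℕ, s.toNat = j + 1 := ⟨s.toNat - 1, by omega⟩
    obtain ⟨w, hw⟩ : ∃ w : ℕ, x.toNat = w + 1 := ⟨x.toNat - 1, by omega⟩
    have h1 : (0:ℤ) ≤ s := by omega
    have h2 : (0:ℤ) ≤ s - 1 := by omega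
    have h3 : (s - 1).toNat = j := by omega
    have h4 : (x + 1).toNat = w + 2 := by omega
    have hwx : ((w : ℚ) + 1) = (x : ℚ) := by
      have h5 : ((w + 1 : ℕ) : ℤ) = x := by omega
      exact_mod_cast congrArg (fun t : ℤ => (t : ℚ)) h5
    simp only [HH, if_pos h1, if_pos h2, hj, hw, h3, h4]
    have hrec : Naux (j+1) (w+2) = Naux (j+1) (w+1) + Naux j (w+1) / ((w : ℚ) + 1) := by
      show Naux (j+1) ((w+1)+1) = _
      rw [Naux]
      push_cast
      ring
    rw [hrec, hc, ← hwx]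
    field_simp
    ring


/-- first-order discrete factor `𝔞 - i·𝔱` -/
def sop (i : ℕ) (w : Sq) : Sq := fun l => -((l:ℚ) + i) * w l + ((l:ℚ) + 1 + 2*i) * w (l+1)

def chain : ℕ → Sq → Sq
  | 0, w => w
  | r+1, w => sop r (chain r w)

lemma chain_succ (r : ℕ) (w : Sq) : chain (r+1) w = sop r (chain r w) := rfl

def poch (x : ℤ) (r : ℕ) : ℚ := ∏ i ∈ range r, ((x:ℚ) + i)

lemma poch_zero (x : ℤ) : poch x 0 = 1 := by simp [poch]

lemma poch_succ (x : ℤ) (r : ℕ) : poch x (r+1) = poch x r * ((x:ℚ) + r) := by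
  simp [poch, prod_range_succ]

lemma choose_id (u a : ℕ) :
    ((a:ℚ) + 1) * (u.choose (a+1) : ℚ) = ((u:ℚ) - a) * (u.choose a : ℚ) := by
  have h := Nat.choose_succ_right_eq u a
  by_cases hau : a ≤ u
  · have h2 : ((u.choose (a+1) : ℚ)) * ((a:ℚ)+1) = (u.choose a : ℚ) * (((u - a : ℕ) : ℚ)) := by
      exact_mod_cast h
    rw [Nat.cast_sub hau] at h2
    linarith
  · push_neg at hau
    rw [Nat.choose_eq_zero_of_lt (by omega), Nat.choose_eq_zero_of_lt (by omega)]
    push_cast; ring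

lemma sum_shift (N : ℕ) (φ g : ℕ → ℚ) (hφ : φ N = 0) :
    ∑ u ∈ range (N+1), φ u * g (u+1)
      = ∑ u ∈ range (N+1), (if u = 0 then 0 else φ (u-1)) * g u := by
  rw [Finset.sum_range_succ, hφ, zero_mul, add_zero, Finset.sum_range_succ']
  simp

lemma sop_finsum {α : Type*} (s : Finset α) (c : α → ℚ) (F : α → Sq) (i : ℕ) (l : ℤ) :
    sop i (fun x => ∑ p ∈ s, c p * F p x) l = ∑ p ∈ s, c p * sop i (F p) l := by
  simp only [sop, Finset.mul_sum]
  rw [← Finset.sum_add_distrib]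
  exact Finset.sum_congr rfl fun p _ => by ring

lemma chain_lincomb {α : Type*} (s : Finset α) (c : α → ℚ) (F : α → Sq) :
    ∀ (r : ℕ) (l : ℤ),
      chain r (fun x => ∑ p ∈ s, c p * F p x) l = ∑ p ∈ s, c p * chain r (F p) l := by
  intro r
  induction r with
  | zero => intro l; rfl
  | succ r ih =>
    intro l
    have hfun : chain r (fun x => ∑ p ∈ s, c p * F p x)
        = fun x => ∑ p ∈ s, c p * chain r (F p) x := funext ih
    simp only [chain_succ]
    rw [hfun, sop_finsum]

lemma chain_congr_ge (L : ℤ) (F F' : Sq) (h : ∀ x ≥ L, F x = F' x) :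
    ∀ (r : ℕ), ∀ x ≥ L, chain r F x = chain r F' x := by
  intro r
  induction r with
  | zero => exact h
  | succ r ih =>
    intro x hx
    simp only [chain_succ, sop]
    rw [ih x hx, ih (x+1) (by omega)]

lemma chain_zero_fun : ∀ (r : ℕ) (l : ℤ), chain r (fun _ => (0:ℚ)) l = 0 := by
  intro r
  induction r with
  | zero => intro l; rfl
  | succ r ih =>
    intro l
    simp only [chain_succ, sop]
    rw [ih l, ih (l+1)]; ring

/-- discrete factorization: the chain equals the banded operator with Pochhammer coefficients -/
lemma chain_eq (r : ℕ) (w : Sq) (l : ℤ) :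
    chain r w l
      = ∑ t ∈ range (r+1), (-1:ℚ)^(r+t) * (r.choose t : ℚ) * poch (l+t) r * w (l+t) := by
  induction r generalizing l with
  | zero => simp [chain, poch]
  | succ r ih =>
    rw [chain_succ]
    show -((l:ℚ) + r) * chain r w l + ((l:ℚ) + 1 + 2*r) * chain r w (l+1) = _
    rw [ih l, ih (l+1)]
    rw [Finset.mul_sum, Finset.mul_sum]
    -- first sum: extend to range (r+2) (top coefficient has choose r (r+1) = 0)
    have e1 : ∑ t ∈ range (r+1), -((l:ℚ) + r) * ((-1:ℚ)^(r+t) * (r.choose t : ℚ) * poch (l+t) r * w (l+t))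
        = ∑ t ∈ range (r+2), -((l:ℚ) + r) * ((-1:ℚ)^(r+t) * (r.choose t : ℚ) * poch (l+t) r * w (l+t)) := by
      rw [Finset.sum_range_succ (n := r+1)]
      simp [Nat.choose_succ_self]
    -- second sum: reindex t ↦ t+1
    have e2 : ∑ t ∈ range (r+1), ((l:ℚ) + 1 + 2*r) * ((-1:ℚ)^(r+t) * (r.choose t : ℚ) * poch (l+1+t) r * w (l+1+t))
        = ∑ t ∈ range (r+2), (if t = 0 then 0 else
            ((l:ℚ) + 1 + 2*r) * ((-1:ℚ)^(r+(t-1)) * (r.choose (t-1) : ℚ) * poch (l+t) r * w (l+t))) := by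
      conv_rhs => rw [Finset.sum_range_succ']
      simp only [Nat.add_sub_cancel, if_neg (Nat.succ_ne_zero _), if_pos rfl, if_true, add_zero]
      apply Finset.sum_congr rfl
      intro t _
      have harg : l + 1 + (t:ℤ) = l + ((t:ℕ)+1 : ℕ) := by push_cast; ring
      rw [harg]
    rw [e1, e2, ← Finset.sum_add_distrib]
    apply Finset.sum_congr rfl
    intro t ht
    rcases t with _ | t
    · -- t = 0
      simp only [if_pos rfl, add_zero, Nat.choose_zero_right, Nat.cast_zero,
        Nat.choose_zero_right, Nat.cast_one]
      rw [poch_succ]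
      push_cast
      ring
    · -- t+1
      simp only [if_neg (Nat.succ_ne_zero _), Nat.add_sub_cancel]
      have harg : l + ((t+1:ℕ):ℤ) = l + (t:ℤ) + 1 := by push_cast; ring
      rw [harg]
      have hp : poch (l + (t:ℤ) + 1) (r+1) = poch (l + (t:ℤ) + 1) r * ((l:ℚ) + (t:ℚ) + 1 + r) := by
        rw [poch_succ]; push_cast; ring
      have hpas : (((r+1).choose (t+1) : ℕ) : ℚ) = (r.choose (t+1) : ℚ) + (r.choose t : ℚ) := by
        rw [Nat.choose_succ_succ]; push_cast; ring
      have hch := choose_id r t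
      rw [hp, hpas]
      linear_combination (-(-1:ℚ)^(r+t) * poch (l + (t:ℤ) + 1) r * w (l + (t:ℤ) + 1)) * hch


/-- triangle coefficients `c_{r,u}` (depending on `k`) -/
def cc (k : ℕ) : ℕ → ℕ → ℚ
  | 0, 0 => 1
  | 0, _+1 => 0
  | r+1, 0 => cc k r 0
  | r+1, u+1 => cc k r (u+1) + ((k:ℚ) + u - 2*r) * cc k r u

/-- Stirling-type coefficients of the rising factorial `ε(ε+1)⋯(ε+s-1)` -/
def ee : ℕ → ℕ → ℚ
  | 0, 0 => 1
  | 0, _+1 => 0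
  | s+1, 0 => (s:ℚ) * ee s 0
  | s+1, d+1 => (s:ℚ) * ee s (d+1) + ee s d

lemma cc_zero_of_gt (k : ℕ) : ∀ r u, r < u → cc k r u = 0 := by
  intro r
  induction r with
  | zero => intro u hu; obtain ⟨v, rfl⟩ : ∃ v, u = v + 1 := ⟨u - 1, by omega⟩; rfl
  | succ r ih =>
    intro u hu
    obtain ⟨v, rfl⟩ : ∃ v, u = v + 1 := ⟨u - 1, by omega⟩
    show cc k r (v+1) + ((k:ℚ) + v - 2*r) * cc k r v = 0
    rw [ih (v+1) (by omega), ih v (by omega)]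
    ring

lemma ee_zero_of_gt : ∀ s d, s < d → ee s d = 0 := by
  intro s
  induction s with
  | zero => intro d hd; obtain ⟨w, rfl⟩ : ∃ w, d = w + 1 := ⟨d - 1, by omega⟩; rfl
  | succ s ih =>
    intro d hd
    obtain ⟨w, rfl⟩ : ∃ w, d = w + 1 := ⟨d - 1, by omega⟩
    show (s:ℚ) * ee s (w+1) + ee s w = 0
    rw [ih (w+1) (by omega), ih w (by omega)]
    ring

lemma ee_zero_zero : ∀ s, 1 ≤ s → ee s 0 = 0 := by
  intro s
  induction s with
  | zero => omega
  | succ s ih =>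
    intro _
    show (s:ℚ) * ee s 0 = 0
    rcases Nat.eq_zero_or_pos s with hs | hs
    · subst hs; norm_num
    · rw [ih hs]; ring

/-- closed product formula for `cc` -/
lemma cc_prod (k : ℕ) : ∀ r u, cc k r u = (r.choose u : ℚ) * ∏ i ∈ range u, ((k:ℚ) - r + i + 1) := by
  intro r
  induction r with
  | zero =>
    intro u
    rcases u with _ | v
    · simp [cc]
    · rw [show cc k 0 (v+1) = 0 from rfl, Nat.choose_eq_zero_of_lt (by omega)]
      push_cast; ring
  | succ r ih =>
    intro u
    rcases u with _ | v
    · show cc k r 0 = _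
      rw [ih 0]
      simp
    · show cc k r (v+1) + ((k:ℚ) + v - 2*r) * cc k r v = _
      rw [ih (v+1), ih v]
      have hpas : (((r+1).choose (v+1) : ℕ) : ℚ) = (r.choose (v+1) : ℚ) + (r.choose v : ℚ) := by
        rw [Nat.choose_succ_succ]; push_cast; ring
      rw [hpas]
      have h1 : ∏ i ∈ range (v+1), ((k:ℚ) - r + i + 1)
          = (∏ i ∈ range v, ((k:ℚ) - r + i + 1)) * ((k:ℚ) - r + v + 1) := by
        rw [prod_range_succ]
      have h2 : ∏ i ∈ range (v+1), ((k:ℚ) - (r+1:ℕ) + i + 1)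
          = ((k:ℚ) - r) * ∏ i ∈ range v, ((k:ℚ) - r + i + 1) := by
        rw [prod_range_succ']
        have e : ∀ i ∈ range v, ((k:ℚ) - ((r+1:ℕ):ℚ) + ((i+1:ℕ):ℚ) + 1) = (k:ℚ) - r + i + 1 := by
          intro i _; push_cast; ring
        rw [Finset.prod_congr rfl e]
        push_cast; ring
      rw [h1, h2]
      have hch := choose_id r v
      linear_combination (∏ i ∈ range v, ((k:ℚ) - r + i + 1)) * hch

lemma cc_kill (n k u : ℕ) (hk : k < n) (hu : n ≤ u + k) : cc k n u = 0 := by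
  rw [cc_prod]
  have hmem : n - k - 1 ∈ range u := by
    simp only [mem_range]; omega
  have hz : ((k:ℚ) - n + ((n - k - 1 : ℕ) : ℚ) + 1) = 0 := by
    have h5 : n - k - 1 + (k + 1) = n := by omega
    have h6 : ((n - k - 1 : ℕ) : ℚ) + ((k:ℚ) + 1) = (n:ℚ) := by exact_mod_cast congrArg (Nat.cast (R := ℚ)) h5
    linarith
  rw [Finset.prod_eq_zero hmem hz]
  ring


/-- the transported basis elements `x^k (1-x)^u φ_{j-d}` -/
def GG (k j : ℕ) (u d : ℕ) : Sq := fun l =>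
  ∑ a ∈ range (u+1), (-1:ℚ)^a * (u.choose a : ℚ) * HH ((j:ℤ) - d) (l + ((k + a : ℕ) : ℤ))

lemma sop_HH (r c : ℕ) (s : ℤ) (l : ℤ) (hl : 1 ≤ l) :
    sop r (fun x => HH s (x + (c:ℤ))) l
      = ((c:ℚ) - r) * HH s (l + c) + (2*(r:ℚ) - c) * HH s (l + c + 1) + HH (s-1) (l + c) := by
  have h := HH_step s (l + c) (by omega)
  show -((l:ℚ) + r) * HH s (l + c) + ((l:ℚ) + 1 + 2*r) * HH s (l + 1 + c) = _
  rw [show l + 1 + (c:ℤ) = l + c + 1 by ring]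
  have hc : ((l + (c:ℤ) : ℤ) : ℚ) = (l:ℚ) + c := by push_cast; ring
  rw [hc] at h
  linear_combination h

lemma sop_GG (k j u d r : ℕ) (l : ℤ) (hl : 1 ≤ l) :
    sop r (GG k j u d) l
      = ((r:ℚ) - u) * GG k j u d l + ((k:ℚ) + u - 2*r) * GG k j (u+1) d l
        + GG k j u (d+1) l := by
  have hstep : sop r (GG k j u d) l
      = ∑ a ∈ range (u+1), (-1:ℚ)^a * (u.choose a : ℚ) *
          ( (((k+a:ℕ):ℚ) - r) * HH ((j:ℤ)-d) (l + ((k+a:ℕ):ℤ))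
            + (2*(r:ℚ) - ((k+a:ℕ):ℚ)) * HH ((j:ℤ)-d) (l + ((k+a:ℕ):ℤ) + 1)
            + HH ((j:ℤ)-d-1) (l + ((k+a:ℕ):ℤ)) ) := by
    show sop r (fun x => ∑ a ∈ range (u+1), (-1:ℚ)^a * (u.choose a : ℚ) *
        HH ((j:ℤ) - d) (x + ((k + a : ℕ) : ℤ))) l = _
    rw [sop_finsum (F := fun a => fun x => HH ((j:ℤ) - d) (x + ((k + a : ℕ) : ℤ)))]
    apply Finset.sum_congr rfl
    intro a _
    rw [sop_HH r (k+a) ((j:ℤ)-d) l hl]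
  rw [hstep]
  have hsplit : ∀ a ∈ range (u+1), (-1:ℚ)^a * (u.choose a : ℚ) *
      ( (((k+a:ℕ):ℚ) - r) * HH ((j:ℤ)-d) (l + ((k+a:ℕ):ℤ))
        + (2*(r:ℚ) - ((k+a:ℕ):ℚ)) * HH ((j:ℤ)-d) (l + ((k+a:ℕ):ℤ) + 1)
        + HH ((j:ℤ)-d-1) (l + ((k+a:ℕ):ℤ)) )
      = ((-1:ℚ)^a * (u.choose a : ℚ) * (((k+a:ℕ):ℚ) - r)) * HH ((j:ℤ)-d) (l + ((k+a:ℕ):ℤ))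
        + ((-1:ℚ)^a * (u.choose a : ℚ) * (2*(r:ℚ) - ((k+a:ℕ):ℚ))) * HH ((j:ℤ)-d) (l + ((k+a:ℕ):ℤ) + 1)
        + (-1:ℚ)^a * (u.choose a : ℚ) * HH ((j:ℤ)-d-1) (l + ((k+a:ℕ):ℤ)) := by
    intro a _; ring
  rw [Finset.sum_congr rfl hsplit, Finset.sum_add_distrib, Finset.sum_add_distrib]
  -- third sum = GG k j u (d+1) l
  have h3 : ∑ a ∈ range (u+1), (-1:ℚ)^a * (u.choose a : ℚ) * HH ((j:ℤ)-d-1) (l + ((k+a:ℕ):ℤ))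
      = GG k j u (d+1) l := by
    apply Finset.sum_congr rfl
    intro a _
    rw [show (j:ℤ) - d - 1 = (j:ℤ) - ((d+1:ℕ):ℤ) by push_cast; ring]
  rw [h3]
  -- second sum: reindex a ↦ a+1
  have h2 : ∑ a ∈ range (u+1), ((-1:ℚ)^a * (u.choose a : ℚ) * (2*(r:ℚ) - ((k+a:ℕ):ℚ)))
        * HH ((j:ℤ)-d) (l + ((k+a:ℕ):ℤ) + 1)
      = ∑ a ∈ range (u+2), (if a = 0 then 0 else
          ((-1:ℚ)^(a-1) * (u.choose (a-1) : ℚ) * (2*(r:ℚ) - ((k+(a-1):ℕ):ℚ))))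
            * HH ((j:ℤ)-d) (l + ((k+a:ℕ):ℤ)) := by
    conv_rhs => rw [Finset.sum_range_succ']
    simp only [Nat.add_sub_cancel, if_neg (Nat.succ_ne_zero _), if_pos rfl, if_true, zero_mul, add_zero]
    apply Finset.sum_congr rfl
    intro a _
    rw [show l + ((k+a:ℕ):ℤ) + 1 = l + ((k+(a+1):ℕ):ℤ) by push_cast; ring]
  rw [h2]
  -- first sum: extend to range (u+2)
  have h1 : ∑ a ∈ range (u+1), ((-1:ℚ)^a * (u.choose a : ℚ) * (((k+a:ℕ):ℚ) - r))
        * HH ((j:ℤ)-d) (l + ((k+a:ℕ):ℤ))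
      = ∑ a ∈ range (u+2), ((-1:ℚ)^a * (u.choose a : ℚ) * (((k+a:ℕ):ℚ) - r))
        * HH ((j:ℤ)-d) (l + ((k+a:ℕ):ℤ)) := by
    rw [Finset.sum_range_succ (n := u+1)]
    simp [Nat.choose_succ_self]
  rw [h1, ← Finset.sum_add_distrib]
  -- RHS: expand the GG's
  have hR1 : ((r:ℚ) - u) * GG k j u d l
      = ∑ a ∈ range (u+2), (((r:ℚ) - u) * ((-1:ℚ)^a * (u.choose a : ℚ)))
          * HH ((j:ℤ)-d) (l + ((k+a:ℕ):ℤ)) := by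
    have hGG : GG k j u d l = ∑ a ∈ range (u+1), (-1:ℚ)^a * (u.choose a : ℚ)
        * HH ((j:ℤ)-d) (l + ((k+a:ℕ):ℤ)) := rfl
    rw [hGG, Finset.mul_sum]
    conv_rhs => rw [Finset.sum_range_succ]
    simp only [Nat.choose_succ_self, Nat.cast_zero, mul_zero, zero_mul, add_zero]
    apply Finset.sum_congr rfl
    intro a _; ring
  have hR2 : ((k:ℚ) + u - 2*r) * GG k j (u+1) d l
      = ∑ a ∈ range (u+2), (((k:ℚ) + u - 2*r) * ((-1:ℚ)^a * ((u+1).choose a : ℚ)))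
          * HH ((j:ℤ)-d) (l + ((k+a:ℕ):ℤ)) := by
    have hGG : GG k j (u+1) d l = ∑ a ∈ range (u+2), (-1:ℚ)^a * ((u+1).choose a : ℚ)
        * HH ((j:ℤ)-d) (l + ((k+a:ℕ):ℤ)) := rfl
    rw [hGG, Finset.mul_sum]
    apply Finset.sum_congr rfl
    intro a _; ring
  rw [hR1, hR2, ← Finset.sum_add_distrib]
  congr 1
  apply Finset.sum_congr rfl
  intro a _
  rcases a with _ | a
  · simp only [if_pos rfl, add_zero, Nat.choose_zero_right, Nat.cast_one, pow_zero,
      Nat.choose_zero_right]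
    push_cast; ring
  · simp only [if_neg (Nat.succ_ne_zero _), Nat.add_sub_cancel]
    have hpas : (((u+1).choose (a+1) : ℕ) : ℚ) = (u.choose (a+1) : ℚ) + (u.choose a : ℚ) := by
      rw [Nat.choose_succ_succ]; push_cast; ring
    have hch := choose_id u a
    rw [hpas]
    push_cast
    linear_combination ((-1:ℚ)^(a+1) * HH ((j:ℤ)-d) (l + ((k:ℤ) + ((a:ℤ)+1)))) * hch


lemma coef_step (k r u d : ℕ) :
    ((r:ℚ) - u) * (cc k r u * ee (r-u) d)
      + (if u = 0 then 0 else cc k r (u-1) * ee (r-(u-1)) d * ((k:ℚ) + ((u-1:ℕ):ℚ) - 2*r))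
      + (if d = 0 then 0 else cc k r u * ee (r-u) (d-1))
      = cc k (r+1) u * ee ((r+1)-u) d := by
  rcases u with _ | v
  · -- u = 0
    simp only [if_pos rfl, if_true, Nat.sub_zero, Nat.cast_zero, add_zero, sub_zero]
    rcases d with _ | w
    · simp only [if_pos rfl, if_true, add_zero]
      show _ = cc k r 0 * ((r:ℚ) * ee r 0)
      ring
    · simp only [if_neg (Nat.succ_ne_zero _), if_true, Nat.add_sub_cancel]
      show _ = cc k r 0 * ((r:ℚ) * ee r (w+1) + ee r w)
      ring
  · -- u = v+1
    simp only [if_neg (Nat.succ_ne_zero _), Nat.add_sub_cancel]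
    rcases Nat.lt_trichotomy v r with hv | hv | hv
    · -- v < r
      obtain ⟨s, rfl⟩ : ∃ s, r = v + 1 + s := ⟨r - (v+1), by omega⟩
      have e1 : v + 1 + s - (v+1) = s := by omega
      have e2 : v + 1 + s - v = s + 1 := by omega
      have e3 : (v + 1 + s + 1) - (v+1) = s + 1 := by omega
      rw [e1, e2, e3]
      have hrec : cc k (v+1+s+1) (v+1)
          = cc k (v+1+s) (v+1) + ((k:ℚ) + v - 2*((v+1+s:ℕ):ℚ)) * cc k (v+1+s) v := rfl
      rw [hrec]
      rcases d with _ | w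
      · have he : ee (s+1) 0 = (s:ℚ) * ee s 0 := rfl
        simp only [if_pos rfl, if_true, he, add_zero]
        push_cast
        ring
      · have he : ee (s+1) (w+1) = (s:ℚ) * ee s (w+1) + ee s w := rfl
        simp only [if_neg (Nat.succ_ne_zero _), Nat.add_sub_cancel, he]
        push_cast
        ring
    · -- v = r
      subst hv
      have e1 : v - (v+1) = 0 := by omega
      have e2 : v - v = 0 := by omega
      have e3 : (v+1) - (v+1) = 0 := by omega
      rw [e1, e2, e3]
      have hz : cc k v (v+1) = 0 := cc_zero_of_gt k v (v+1) (by omega)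
      have hrec : cc k (v+1) (v+1) = cc k v (v+1) + ((k:ℚ) + v - 2*v) * cc k v v := rfl
      rcases d with _ | w
      · simp only [if_pos rfl, if_true, add_zero, hrec, hz]
        ring
      · simp only [if_neg (Nat.succ_ne_zero _), if_true, Nat.add_sub_cancel, hrec, hz]
        ring
    · -- v > r
      have hz1 : cc k r (v+1) = 0 := cc_zero_of_gt k r (v+1) (by omega)
      have hz2 : cc k r v = 0 := cc_zero_of_gt k r v (by omega)
      have hz3 : cc k (r+1) (v+1) = 0 := cc_zero_of_gt k (r+1) (v+1) (by omega)
      rw [hz1, hz2, hz3]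
      rcases d with _ | w
      · simp only [if_pos rfl, if_true]; ring
      · simp only [if_neg (Nat.succ_ne_zero _)]; ring


lemma sop_finsum' {α : Type*} (s : Finset α) (F : α → Sq) (i : ℕ) (l : ℤ) :
    sop i (fun x => ∑ p ∈ s, F p x) l = ∑ p ∈ s, sop i (F p) l := by
  simp only [sop, Finset.mul_sum]
  rw [← Finset.sum_add_distrib]

/-- Key induction: the chain applied to a shifted basis sequence. -/
lemma main_chain (n k j : ℕ) :
    ∀ r, r ≤ n → ∀ l : ℤ, 1 ≤ l →
      chain r (fun x => HH (j:ℤ) (x + (k:ℤ))) l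
        = ∑ u ∈ range (n+1), ∑ d ∈ range (n+1), cc k r u * ee (r-u) d * GG k j u d l := by
  intro r
  induction r with
  | zero =>
    intro _ l hl
    rw [Finset.sum_eq_single_of_mem 0 (by simp)]
    · rw [Finset.sum_eq_single_of_mem 0 (by simp)]
      · have hGG : GG k j 0 0 l = HH ((j:ℤ) - (0:ℕ)) (l + ((k + 0 : ℕ):ℤ)) := by
          show (∑ a ∈ range 1, _ : ℚ) = _
          rw [Finset.sum_range_one]
          norm_num
        rw [hGG]
        show HH (j:ℤ) (l + (k:ℤ)) = _
        norm_num
        rw [show cc k 0 0 = 1 from rfl, show ee 0 0 = 1 from rfl]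
        ring
      · intro d _ hd
        obtain ⟨w, rfl⟩ : ∃ w, d = w + 1 := ⟨d - 1, by omega⟩
        rw [show ee (0 - 0) (w+1) = 0 from rfl]
        ring
    · intro u _ hu
      obtain ⟨v, rfl⟩ : ∃ v, u = v + 1 := ⟨u - 1, by omega⟩
      rw [show cc k 0 (v+1) = 0 from rfl]
      simp
  | succ r ih =>
    intro hr l hl
    have hr' : r ≤ n := by omega
    have hrn : r < n := by omega
    rw [chain_succ]
    show -((l:ℚ) + r) * chain r (fun x => HH (j:ℤ) (x + (k:ℤ))) l
        + ((l:ℚ) + 1 + 2*r) * chain r (fun x => HH (j:ℤ) (x + (k:ℤ))) (l+1) = _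
    rw [ih hr' l hl, ih hr' (l+1) (by omega)]
    have hsop : -((l:ℚ) + r) * (∑ u ∈ range (n+1), ∑ d ∈ range (n+1),
          cc k r u * ee (r-u) d * GG k j u d l)
        + ((l:ℚ) + 1 + 2*r) * (∑ u ∈ range (n+1), ∑ d ∈ range (n+1),
          cc k r u * ee (r-u) d * GG k j u d (l+1))
        = ∑ u ∈ range (n+1), ∑ d ∈ range (n+1),
            cc k r u * ee (r-u) d * sop r (GG k j u d) l := by
      have e0 : sop r (fun x => ∑ u ∈ range (n+1), ∑ d ∈ range (n+1),
          cc k r u * ee (r-u) d * GG k j u d x) l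
          = ∑ u ∈ range (n+1), ∑ d ∈ range (n+1),
              cc k r u * ee (r-u) d * sop r (GG k j u d) l := by
        rw [sop_finsum' (F := fun u => fun x => ∑ d ∈ range (n+1),
          cc k r u * ee (r-u) d * GG k j u d x)]
        apply Finset.sum_congr rfl
        intro u _
        rw [sop_finsum (c := fun d => cc k r u * ee (r-u) d) (F := fun d => GG k j u d)]
      exact e0.symm ▸ rfl
    rw [hsop]
    have hexp : ∀ u ∈ range (n+1), ∀ d ∈ range (n+1),
        cc k r u * ee (r-u) d * sop r (GG k j u d) l
          = (cc k r u * ee (r-u) d * ((r:ℚ) - u)) * GG k j u d l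
            + (cc k r u * ee (r-u) d * ((k:ℚ) + u - 2*r)) * GG k j (u+1) d l
            + (cc k r u * ee (r-u) d) * GG k j u (d+1) l := by
      intro u _ d _
      rw [sop_GG k j u d r l hl]
      ring
    rw [Finset.sum_congr rfl (fun u hu => Finset.sum_congr rfl (fun d hd => hexp u hu d hd))]
    -- split the double sum into three
    have hS2 : ∑ u ∈ range (n+1), ∑ d ∈ range (n+1),
          (cc k r u * ee (r-u) d * ((k:ℚ) + u - 2*r)) * GG k j (u+1) d l
        = ∑ u ∈ range (n+1), ∑ d ∈ range (n+1),
          (if u = 0 then 0 else cc k r (u-1) * ee (r-(u-1)) d * ((k:ℚ) + ((u-1:ℕ):ℚ) - 2*r))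
            * GG k j u d l := by
      rw [Finset.sum_comm]
      conv_rhs => rw [Finset.sum_comm]
      apply Finset.sum_congr rfl
      intro d _
      exact sum_shift n (fun u => cc k r u * ee (r-u) d * ((k:ℚ) + u - 2*r))
        (fun v => GG k j v d l)
        (by show cc k r n * ee (r-n) d * ((k:ℚ) + n - 2*r) = 0
            rw [cc_zero_of_gt k r n (by omega)]; ring)
    have hS3 : ∑ u ∈ range (n+1), ∑ d ∈ range (n+1),
          (cc k r u * ee (r-u) d) * GG k j u (d+1) l
        = ∑ u ∈ range (n+1), ∑ d ∈ range (n+1),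
          (if d = 0 then 0 else cc k r u * ee (r-u) (d-1)) * GG k j u d l := by
      apply Finset.sum_congr rfl
      intro u _
      exact sum_shift n (fun d => cc k r u * ee (r-u) d)
        (fun w => GG k j u w l)
        (by show cc k r u * ee (r-u) n = 0
            rw [ee_zero_of_gt (r-u) n (by omega)]; ring)
    rw [Finset.sum_congr rfl (fun u (_ : u ∈ range (n+1)) => Finset.sum_add_distrib),
        Finset.sum_add_distrib,
        Finset.sum_congr rfl (fun u (_ : u ∈ range (n+1)) =>
          (Finset.sum_add_distrib (s := range (n+1)))),
        Finset.sum_add_distrib, hS2, hS3]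
    rw [← Finset.sum_add_distrib, ← Finset.sum_add_distrib]
    apply Finset.sum_congr rfl
    intro u _
    rw [← Finset.sum_add_distrib, ← Finset.sum_add_distrib]
    apply Finset.sum_congr rfl
    intro d _
    linear_combination (coef_step k r u d) * (GG k j u d l)

lemma iter_congr (n s : ℕ) (F F' : Sq) (h : ∀ x ≥ (1:ℤ), F x = F' x) :
    ∀ x ≥ (1:ℤ), (chain n)^[s] F x = (chain n)^[s] F' x := by
  induction s generalizing F F' with
  | zero => exact h
  | succ s ih =>
    intro x hx
    rw [Function.iterate_succ_apply, Function.iterate_succ_apply]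
    exact ih (chain n F) (chain n F') (fun y hy => chain_congr_ge 1 F F' h n y hy) x hx

lemma iter_lincomb {α : Type*} (n s : ℕ) (S : Finset α) (c : α → ℚ) (F : α → Sq) (l : ℤ) :
    (chain n)^[s] (fun x => ∑ p ∈ S, c p * F p x) l = ∑ p ∈ S, c p * (chain n)^[s] (F p) l := by
  induction s generalizing F with
  | zero => rfl
  | succ s ih =>
    rw [Function.iterate_succ_apply]
    have hc : chain n (fun x => ∑ p ∈ S, c p * F p x)
        = fun x => ∑ p ∈ S, c p * chain n (F p) x := funext (chain_lincomb S c F n)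
    rw [hc]
    have := ih (fun p => chain n (F p))
    rw [this]
    apply Finset.sum_congr rfl
    intro p _
    rw [Function.iterate_succ_apply]

lemma iter_zero (n s : ℕ) (l : ℤ) : (chain n)^[s] (fun _ => (0:ℚ)) l = 0 := by
  induction s generalizing l with
  | zero => rfl
  | succ s ih =>
    rw [Function.iterate_succ_apply]
    have : chain n (fun _ => (0:ℚ)) = fun _ => (0:ℚ) := funext (chain_zero_fun n)
    rw [this]
    exact ih l

/-- main vanishing lemma -/
lemma mu (n : ℕ) (hn : 1 ≤ n) :
    ∀ j : ℕ, ∀ k : ℕ, k < n → ∀ s : ℕ, j ≤ s → ∀ l : ℤ, 1 ≤ l →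
      (chain n)^[s+1] (fun x => HH (j:ℤ) (x + (k:ℤ))) l = 0 := by
  intro j
  induction j using Nat.strong_induction_on with
  | _ j IH =>
  intro k hk s hs l hl
  rw [Function.iterate_succ_apply]
  have hmc : ∀ x ≥ (1:ℤ), chain n (fun y => HH (j:ℤ) (y + (k:ℤ))) x
      = (fun y => ∑ p ∈ (range (n+1)) ×ˢ (range (n+1)),
          (cc k n p.1 * ee (n - p.1) p.2) * GG k j p.1 p.2 y) x := by
    intro x hx
    rw [main_chain n k j n le_rfl x hx]
    exact (Finset.sum_product (s := range (n+1)) (t := range (n+1))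
      (f := fun p => cc k n p.1 * ee (n - p.1) p.2 * GG k j p.1 p.2 x)).symm
  rw [iter_congr n s _ _ hmc l hl]
  rw [iter_lincomb]
  apply Finset.sum_eq_zero
  rintro ⟨u, d⟩ hp
  rw [Finset.mem_product, Finset.mem_range, Finset.mem_range] at hp
  obtain ⟨hu, hd'⟩ := hp
  by_cases hd : d = 0
  · subst hd
    by_cases hun : u = n
    · rw [hun, cc_kill n k n hk (by omega)]
      ring
    · rw [ee_zero_zero (n - u) (by omega)]
      ring
  · by_cases hnk : n ≤ u + k
    · rw [cc_kill n k u hk hnk]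
      ring
    · -- u + k < n and d ≥ 1
      have hGz : (chain n)^[s] (GG k j u d) l = 0 := by
        have hGG : GG k j u d = fun y => ∑ a ∈ range (u+1),
            ((-1:ℚ)^a * (u.choose a : ℚ)) * (fun y' => HH ((j:ℤ) - d) (y' + ((k+a:ℕ):ℤ))) y := rfl
        rw [hGG, iter_lincomb]
        apply Finset.sum_eq_zero
        intro a ha
        rw [Finset.mem_range] at ha
        rcases lt_or_ge ((j:ℤ) - d) 0 with hneg | hpos
        · have hF : (fun y' => HH ((j:ℤ) - d) (y' + ((k+a:ℕ):ℤ))) = fun _ => (0:ℚ) :=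
            funext fun y => HH_neg hneg _
          rw [hF, iter_zero]
          ring
        · set j' := ((j:ℤ) - d).toNat with hj'def
          have hj'e : ((j':ℕ):ℤ) = (j:ℤ) - d := Int.toNat_of_nonneg hpos
          have hj' : j' < j := by omega
          have hs1 : 1 ≤ s := by omega
          have hF : (fun y' => HH ((j:ℤ) - d) (y' + ((k+a:ℕ):ℤ)))
              = fun y' => HH ((j':ℕ):ℤ) (y' + (((k+a:ℕ)):ℤ)) := by
            funext y; rw [hj'e]
          rw [hF]
          have hres := IH j' hj' (k+a) (by omega) (s-1) (by omega) l hl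
          rw [show s = (s-1)+1 by omega]
          rw [hres]
          ring
      rw [hGz]
      ring


/-! ### Bridge to the Laurent-series operators -/

lemma chain_mul (c : ℚ) (F : Sq) : ∀ (r : ℕ) (l : ℤ),
    chain r (fun x => c * F x) l = c * chain r F l := by
  intro r
  induction r with
  | zero => intro l; rfl
  | succ r ih =>
    intro l
    have hfun : chain r (fun x => c * F x) = fun x => c * chain r F x := funext ih
    simp only [chain_succ, hfun, sop]
    ring

lemma pmul_ext (P : Polynomial ℚ) (f : LS ℚ) (k : ℤ) (B : ℕ) (hB : P.natDegree ≤ B) :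
    pmul P f k = ∑ i ∈ range (B+1), P.coeff i * f (k+i) := by
  apply Finset.sum_subset
  · exact Finset.range_subset_range.2 (by omega)
  · intro i hi hni
    simp only [Finset.mem_range] at hi hni
    rw [Polynomial.coeff_eq_zero_of_natDegree_lt (by omega)]
    ring

lemma dz_apply (f : LS ℚ) (y : ℤ) : dz f y = ((1:ℚ) - y) * f (y - 1) := by
  show ((1 - y : ℤ) : ℚ) * f (y - 1) = _
  push_cast
  ring

lemma T_apply (f : LS ℚ) (k : ℤ) :
    pmul (X * (X - 1)) (dz f) k = (k:ℚ) * f k - ((k:ℚ)+1) * f (k+1) := by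
  have hP : (X * (X - 1) : Polynomial ℚ) = X^2 - X := by ring
  have hd : (X * (X - 1) : Polynomial ℚ).natDegree ≤ 2 := by
    rw [hP]; compute_degree
  rw [pmul_ext _ _ _ 2 hd, hP]
  rw [Finset.sum_range_succ, Finset.sum_range_succ, Finset.sum_range_one]
  simp only [Polynomial.coeff_sub, Polynomial.coeff_X_pow, Polynomial.coeff_X]
  norm_num
  rw [dz_apply, dz_apply]
  rw [show k + (1:ℤ) - 1 = k by ring, show k + (2:ℤ) - 1 = k + 1 by ring]
  push_cast
  ring

lemma dz_iter (n : ℕ) : ∀ (f : LS ℚ) (k : ℤ),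
    (dz^[n]) f k = (∏ i ∈ range n, ((i:ℚ) + 1 - k)) * f (k - n) := by
  induction n with
  | zero => intro f k; simp
  | succ n ih =>
    intro f k
    rw [Function.iterate_succ_apply', dz_apply, ih f (k-1)]
    rw [Finset.prod_range_succ']
    have e1 : ∀ i : ℕ, ((i+1:ℕ):ℚ) + 1 - k = (i:ℚ) + 1 - (k - 1) := by
      intro i; push_cast; ring
    rw [Finset.prod_congr rfl (fun i _ => e1 i)]
    rw [show k - 1 - (n:ℤ) = k - ((n+1:ℕ):ℤ) by push_cast; ring]
    push_cast
    ring

lemma key_prod : ∀ (n : ℕ) (y : ℚ),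
    ∏ i ∈ range n, ((i:ℚ) + 1 - y - n) = (-1:ℚ)^n * ∏ i ∈ range n, (y + i) := by
  intro n
  induction n with
  | zero => intro y; simp
  | succ n ih =>
    intro y
    rw [Finset.prod_range_succ]
    have e1 : ∀ i ∈ range n, ((i:ℚ) + 1 - y - ((n+1:ℕ):ℚ)) = (i:ℚ) + 1 - (y+1) - n := by
      intro i _; push_cast; ring
    rw [Finset.prod_congr rfl e1, ih (y+1)]
    have hrhs : ∏ i ∈ range (n+1), (y + (i:ℚ))
        = (∏ i ∈ range n, ((y+1) + (i:ℚ))) * y := by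
      rw [Finset.prod_range_succ']
      have e2 : ∀ i ∈ range n, (y + ((i+1:ℕ):ℚ)) = (y+1) + (i:ℚ) := by
        intro i _; push_cast; ring
      rw [Finset.prod_congr rfl e2]
      norm_num
    rw [hrhs]
    push_cast
    ring

lemma neg_one_pow_helper (n t : ℕ) (ht : t ≤ n) :
    (-1:ℚ)^(n-t) * (-1:ℚ)^n = (-1:ℚ)^t := by
  have h1 : (-1:ℚ)^(n-t) * (-1:ℚ)^t = (-1:ℚ)^n := by
    rw [← pow_add]; congr 1; omega
  have h2 : (-1:ℚ)^t * (-1:ℚ)^t = 1 := by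
    rw [← pow_add, ← two_mul, pow_mul]; norm_num
  have h3 : (-1:ℚ)^n * (-1:ℚ)^n = 1 := by
    rw [← pow_add, ← two_mul, pow_mul]; norm_num
  have h4 : (-1:ℚ)^(n-t) = (-1:ℚ)^n * (-1)^t := by
    calc (-1:ℚ)^(n-t) = (-1)^(n-t) * ((-1)^t * (-1)^t) := by rw [h2]; ring
    _ = ((-1:ℚ)^(n-t) * (-1)^t) * (-1)^t := by ring
    _ = (-1:ℚ)^n * (-1)^t := by rw [h1]
  rw [h4]
  linear_combination ((-1:ℚ)^t) * h3

lemma Dd_apply (n : ℕ) (f : LS ℚ) (k : ℤ) :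
    pmul (X^n * (X-1)^n) (dz^[n] f) k
      = ∑ t ∈ range (n+1), (-1:ℚ)^t * (n.choose t : ℚ) * poch (k+t) n * f (k+t) := by
  have hd : (X^n * (X-1)^n : Polynomial ℚ).natDegree ≤ 2*n := by
    apply le_trans (Polynomial.natDegree_mul_le)
    have h1 : (X^n : Polynomial ℚ).natDegree = n := Polynomial.natDegree_X_pow n
    have h2 : ((X-1)^n : Polynomial ℚ).natDegree ≤ n := by
      apply le_trans (Polynomial.natDegree_pow_le)
      have : ((X : Polynomial ℚ) - 1).natDegree = 1 := by
        rw [show (X - 1 : Polynomial ℚ) = X - Polynomial.C 1 by norm_num]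
        exact Polynomial.natDegree_X_sub_C 1
      rw [this]; omega
    omega
  rw [pmul_ext _ _ _ (2*n) hd]
  have hcoeff : ∀ i : ℕ, (X^n * (X-1)^n : Polynomial ℚ).coeff i
      = if n ≤ i then ((-1:ℚ))^(n-(i-n)) * ((n.choose (i-n) : ℚ)) else 0 := by
    intro i
    rw [Polynomial.coeff_X_pow_mul']
    congr 1
    rw [show ((X:Polynomial ℚ) - 1) = X + Polynomial.C (-1) by
      rw [Polynomial.C_neg, Polynomial.C_1]; ring]
    rw [Polynomial.coeff_X_add_C_pow]
  have h2n : 2*n + 1 = n + (n+1) := by ring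
  rw [h2n, Finset.sum_range_add]
  have hz : ∀ i ∈ range n, (X^n * (X-1)^n : Polynomial ℚ).coeff i * (dz^[n] f) (k+i) = 0 := by
    intro i hi
    rw [Finset.mem_range] at hi
    rw [hcoeff i, if_neg (by omega)]
    ring
  rw [Finset.sum_congr rfl hz, Finset.sum_const, smul_zero, zero_add]
  apply Finset.sum_congr rfl
  intro t ht
  rw [Finset.mem_range] at ht
  rw [hcoeff (n+t), if_pos (by omega), Nat.add_sub_cancel_left]
  rw [dz_iter n f (k + ((n+t:ℕ):ℤ))]
  have harg : k + ((n+t:ℕ):ℤ) - n = k + t := by push_cast; ring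
  rw [harg]
  have hpr : ∏ i ∈ range n, ((i:ℚ) + 1 - ((k + ((n+t:ℕ):ℤ) : ℤ) : ℚ))
      = (-1:ℚ)^n * poch (k+t) n := by
    have : ∀ i ∈ range n, ((i:ℚ) + 1 - ((k + ((n+t:ℕ):ℤ) : ℤ) : ℚ))
        = (i:ℚ) + 1 - (((k + (t:ℤ) : ℤ)):ℚ) - n := by
      intro i _; push_cast; ring
    rw [Finset.prod_congr rfl this, key_prod n (((k + (t:ℤ) : ℤ)):ℚ)]
    rfl
  rw [hpr]
  have hsgn := neg_one_pow_helper n t (by omega)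
  linear_combination ((n.choose t : ℚ) * poch (k+(t:ℤ)) n * f (k+(t:ℤ))) * hsgn

lemma Dd_eq_chain (n : ℕ) (f : LS ℚ) (k : ℤ) :
    pmul (X^n * (X-1)^n) (dz^[n] f) k = (-1:ℚ)^n * chain n f k := by
  rw [Dd_apply, chain_eq, Finset.mul_sum]
  apply Finset.sum_congr rfl
  intro t _
  have he : (-1:ℚ)^(n*2) = 1 := by rw [show n*2 = 2*n by ring, pow_mul]; norm_num
  linear_combination (-((-1:ℚ)^t * ((n.choose t : ℚ) * poch (k+(t:ℤ)) n * f (k+(t:ℤ))))) * he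

lemma Rn_eq_chain (n : ℕ) : ∀ (m : ℕ) (g : LS ℚ) (x : ℤ),
    ((fun h : LS ℚ => pmul (X^n * (X-1)^n) (dz^[n] h))^[m]) g x
      = (-1:ℚ)^(n*m) * ((chain n)^[m]) g x := by
  intro m
  induction m with
  | zero => intro g x; simp
  | succ m ih =>
    intro g x
    rw [Function.iterate_succ_apply', Function.iterate_succ_apply']
    rw [Dd_eq_chain]
    have hfun : ((fun h : LS ℚ => pmul (X^n * (X-1)^n) (dz^[n] h))^[m]) g
        = fun y => (-1:ℚ)^(n*m) * ((chain n)^[m]) g y := funext (ih g)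
    rw [hfun, chain_mul]
    rw [show n*(m+1) = n*m + n by ring, pow_add]
    ring


lemma zmul_iter (κ : ℕ) (f : LS ℚ) : ∀ l : ℤ, (zmul^[κ]) f l = f (l + κ) := by
  induction κ with
  | zero => intro l; simp
  | succ κ ih =>
    intro l
    rw [Function.iterate_succ_apply']
    show (zmul^[κ]) f (l+1) = _
    rw [ih (l+1)]
    congr 1
    push_cast
    ring

/-- the first-order recurrence operator `A` -/
def Aop (w : Sq) : Sq := fun l => (l:ℚ) * w l - ((l:ℚ)+1) * w (l+1)

lemma T_fun_eq : (fun f : LS ℚ => pmul (X * (X - 1)) (dz f)) = Aop := by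
  funext f k
  rw [T_apply]
  rfl

lemma Aop_HH (s : ℤ) (x : ℤ) (hx : 1 ≤ x) : Aop (HH s) x = -HH (s-1) x := by
  have h := HH_step s x hx
  show (x:ℚ) * HH s x - ((x:ℚ)+1) * HH s (x+1) = _
  linarith

lemma HH_zero_eq (l : ℤ) (hl : 1 ≤ l) : HH 0 l = 1 / (l:ℚ) := by
  simp only [HH, le_refl, if_pos, Int.toNat_zero, Naux_zero]

/-- kernel characterization: solutions of `A^m f = 0` on `l ≥ 1` are spanned by the `HH j` -/
lemma ker_Aop : ∀ (m : ℕ) (f : Sq), (∀ l : ℤ, 1 ≤ l → (Aop^[m]) f l = 0) →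
    ∃ c : ℕ → ℚ, ∀ l : ℤ, 1 ≤ l → f l = ∑ j ∈ range m, c j * HH (j:ℤ) l := by
  intro m
  induction m with
  | zero =>
    intro f hf
    exact ⟨fun _ => 0, fun l hl => by simpa using hf l hl⟩
  | succ m ih =>
    intro f hf
    have hf' : ∀ l : ℤ, 1 ≤ l → (Aop^[m]) (Aop f) l = 0 := by
      intro l hl
      rw [← Function.iterate_succ_apply]
      exact hf l hl
    obtain ⟨c, hc⟩ := ih (Aop f) hf'
    set F : Sq := fun x => f x + ∑ j ∈ range m, c j * HH ((j:ℤ)+1) x with hFdef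
    have hAF : ∀ l : ℤ, 1 ≤ l → Aop F l = 0 := by
      intro l hl
      have hexp : Aop F l = Aop f l + ∑ j ∈ range m, c j * Aop (HH ((j:ℤ)+1)) l := by
        simp only [Aop, hFdef]
        rw [mul_add, mul_add, Finset.mul_sum, Finset.mul_sum]
        have e2 : ∑ j ∈ range m, c j * ((l:ℚ) * HH ((j:ℤ)+1) l - ((l:ℚ)+1) * HH ((j:ℤ)+1) (l+1))
            = (∑ j ∈ range m, (l:ℚ) * (c j * HH ((j:ℤ)+1) l))
              - ∑ j ∈ range m, ((l:ℚ)+1) * (c j * HH ((j:ℤ)+1) (l+1)) := by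
          rw [← Finset.sum_sub_distrib]
          apply Finset.sum_congr rfl
          intro j _
          ring
        rw [e2]
        ring
      rw [hexp, hc l hl]
      have hj : ∀ j ∈ range m, c j * Aop (HH ((j:ℤ)+1)) l = -(c j * HH (j:ℤ) l) := by
        intro j _
        rw [Aop_HH ((j:ℤ)+1) l hl]
        rw [show (j:ℤ) + 1 - 1 = (j:ℤ) by ring]
        ring
      rw [Finset.sum_congr rfl hj]
      rw [Finset.sum_neg_distrib]
      ring
    have hF1 : ∀ l : ℤ, 1 ≤ l → (l:ℚ) * F l = F 1 := by
      refine Int.le_induction ?_ ?_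
      · norm_num
      · intro x hx ihx
        have h0 : (x:ℚ) * F x - ((x:ℚ)+1) * F (x+1) = 0 := hAF x hx
        push_cast
        linarith
    have hFl : ∀ l : ℤ, 1 ≤ l → F l = F 1 * HH 0 l := by
      intro l hl
      have h1 := hF1 l hl
      have hl0 : (l:ℚ) ≠ 0 := by exact_mod_cast (by omega : l ≠ 0)
      rw [HH_zero_eq l hl]
      field_simp
      linarith
    refine ⟨fun j => match j with | 0 => F 1 | j+1 => -c j, ?_⟩
    intro l hl
    have hfl : f l = F l - ∑ j ∈ range m, c j * HH ((j:ℤ)+1) l := by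
      rw [hFdef]
      ring
    rw [hfl, hFl l hl, Finset.sum_range_succ']
    simp only []
    have : ∀ j ∈ range m, -c j * HH ((j+1:ℕ):ℤ) l = -(c j * HH ((j:ℤ)+1) l) := by
      intro j _
      rw [show ((j+1:ℕ):ℤ) = (j:ℤ)+1 by push_cast; ring]
      ring
    rw [Finset.sum_congr rfl this, Finset.sum_neg_distrib]
    rw [show ((0:ℕ):ℤ) = (0:ℤ) by norm_num]
    ring

/-- construction of the polynomial from a two-sided-vanishing sequence -/
lemma isPol_of (h : LS ℚ) (B : ℕ) (h1 : ∀ x : ℤ, 1 ≤ x → h x = 0)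
    (h2 : ∀ x : ℤ, x ≤ -(B:ℤ) → h x = 0) : IsPol h := by
  refine ⟨∑ i ∈ range (B+1), Polynomial.monomial i (h (-(i:ℤ))), ?_⟩
  funext x
  unfold ofPoly
  by_cases hx : x ≤ 0
  · rw [if_pos hx]
    have hcoeff : (∑ i ∈ range (B+1), Polynomial.monomial i (h (-(i:ℤ)))).coeff (-x).toNat
        = if (-x).toNat ≤ B then h (-(((-x).toNat : ℕ):ℤ)) else 0 := by
      rw [Polynomial.finset_sum_coeff]
      by_cases hB : (-x).toNat ≤ B
      · rw [Finset.sum_eq_single_of_mem ((-x).toNat) (by simp only [Finset.mem_range]; omega)]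
        · rw [Polynomial.coeff_monomial, if_pos rfl, if_pos hB]
        · intro i _ hne
          rw [Polynomial.coeff_monomial, if_neg hne]
      · rw [if_neg hB]
        apply Finset.sum_eq_zero
        intro i hi
        rw [Polynomial.coeff_monomial, if_neg (by simp only [Finset.mem_range] at hi; omega)]
    rw [hcoeff]
    by_cases hB : (-x).toNat ≤ B
    · rw [if_pos hB]
      congr 1
      omega
    · rw [if_neg hB]
      exact h2 x (by omega)
  · rw [if_neg hx]
    exact h1 x (by omega)

lemma isPol_smul (c : ℚ) (h : LS ℚ) (hp : IsPol h) : IsPol (c • h) := by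
  obtain ⟨P, hP⟩ := hp
  refine ⟨Polynomial.C c * P, ?_⟩
  funext x
  have : (c • h) x = c * h x := rfl
  rw [this, hP]
  unfold ofPoly
  by_cases hx : x ≤ 0
  · rw [if_pos hx, if_pos hx, Polynomial.coeff_C_mul]
  · rw [if_neg hx, if_neg hx, mul_zero]

lemma Dd_left (n : ℕ) (f : LS ℚ) (C : ℤ) (hf : ∀ x : ℤ, x ≤ C → f x = 0) :
    ∀ x : ℤ, x ≤ C - n → pmul (X^n * (X-1)^n) (dz^[n] f) x = 0 := by
  intro x hx
  rw [Dd_apply]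
  apply Finset.sum_eq_zero
  intro t ht
  rw [Finset.mem_range] at ht
  rw [hf (x+t) (by omega)]
  ring

lemma Rn_left (n : ℕ) (g : LS ℚ) (hg : ∀ x : ℤ, x ≤ 0 → g x = 0) :
    ∀ (m : ℕ) (x : ℤ), x ≤ -((m*n : ℕ):ℤ) →
      ((fun h : LS ℚ => pmul (X^n * (X-1)^n) (dz^[n] h))^[m]) g x = 0 := by
  intro m
  induction m with
  | zero =>
    intro x hx
    exact hg x (by push_cast at hx; omega)
  | succ m ih =>
    intro x hx
    rw [Function.iterate_succ_apply']
    apply Dd_left n _ (-((m*n : ℕ):ℤ)) ih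
    push_cast at hx ⊢
    have : (m:ℤ)*n + n = ((m:ℤ)+1)*n := by ring
    omega


/-! ### linearity of the operators -/

lemma pmul_add (P : Polynomial ℚ) (f g : LS ℚ) (k : ℤ) :
    pmul P (f + g) k = pmul P f k + pmul P g k := by
  unfold pmul
  rw [← Finset.sum_add_distrib]
  apply Finset.sum_congr rfl
  intro i _
  show P.coeff i * (f (k+i) + g (k+i)) = _
  ring

lemma pmul_smul (P : Polynomial ℚ) (a : ℚ) (f : LS ℚ) (k : ℤ) :
    pmul P (a • f) k = a * pmul P f k := by
  unfold pmul
  rw [Finset.mul_sum]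
  apply Finset.sum_congr rfl
  intro i _
  show P.coeff i * (a * f (k+i)) = _
  ring

lemma dz_add (f g : LS ℚ) : dz (f + g) = dz f + dz g := by
  funext y
  show ((1 - y : ℤ) : ℚ) * (f (y-1) + g (y-1)) = ((1-y:ℤ):ℚ) * f (y-1) + ((1-y:ℤ):ℚ) * g (y-1)
  ring

lemma dz_smul (a : ℚ) (f : LS ℚ) : dz (a • f) = a • dz f := by
  funext y
  show ((1 - y : ℤ) : ℚ) * (a * f (y-1)) = a * (((1-y:ℤ):ℚ) * f (y-1))
  ring

lemma dzn_add (j : ℕ) (f g : LS ℚ) : (dz^[j]) (f + g) = (dz^[j]) f + (dz^[j]) g := by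
  induction j generalizing f g with
  | zero => rfl
  | succ j ih =>
    rw [Function.iterate_succ_apply, Function.iterate_succ_apply, Function.iterate_succ_apply,
      dz_add, ih]

lemma dzn_smul (j : ℕ) (a : ℚ) (f : LS ℚ) : (dz^[j]) (a • f) = a • (dz^[j]) f := by
  induction j generalizing f with
  | zero => rfl
  | succ j ih =>
    rw [Function.iterate_succ_apply, Function.iterate_succ_apply, dz_smul, ih]

lemma DDm_add (n m : ℕ) (f g : LS ℚ) :
    ((fun h : LS ℚ => pmul (X^n * (X-1)^n) (dz^[n] h))^[m]) (f + g)
      = ((fun h : LS ℚ => pmul (X^n * (X-1)^n) (dz^[n] h))^[m]) f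
        + ((fun h : LS ℚ => pmul (X^n * (X-1)^n) (dz^[n] h))^[m]) g := by
  induction m generalizing f g with
  | zero => rfl
  | succ m ih =>
    rw [Function.iterate_succ_apply, Function.iterate_succ_apply, Function.iterate_succ_apply]
    have h1 : pmul (X^n * (X-1)^n) (dz^[n] (f + g))
        = pmul (X^n * (X-1)^n) (dz^[n] f) + pmul (X^n * (X-1)^n) (dz^[n] g) := by
      funext k
      rw [dzn_add]
      exact pmul_add _ _ _ k
    rw [h1, ih]

lemma DDm_smul (n m : ℕ) (a : ℚ) (f : LS ℚ) :
    ((fun h : LS ℚ => pmul (X^n * (X-1)^n) (dz^[n] h))^[m]) (a • f)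
      = a • ((fun h : LS ℚ => pmul (X^n * (X-1)^n) (dz^[n] h))^[m]) f := by
  induction m generalizing f with
  | zero => rfl
  | succ m ih =>
    rw [Function.iterate_succ_apply, Function.iterate_succ_apply]
    have h1 : pmul (X^n * (X-1)^n) (dz^[n] (a • f))
        = a • pmul (X^n * (X-1)^n) (dz^[n] f) := by
      funext k
      rw [dzn_smul]
      exact pmul_smul _ _ _ k
    rw [h1, ih]

lemma isPol_add (f g : LS ℚ) (hf : IsPol f) (hg : IsPol g) : IsPol (f + g) := by
  obtain ⟨P, hP⟩ := hf
  obtain ⟨Q, hQ⟩ := hg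
  refine ⟨P + Q, ?_⟩
  funext x
  show f x + g x = _
  rw [hP, hQ]
  unfold ofPoly
  by_cases hx : x ≤ 0
  · rw [if_pos hx, if_pos hx, if_pos hx, Polynomial.coeff_add]
  · rw [if_neg hx, if_neg hx, if_neg hx, add_zero]

end S19

open S19 in
/-- Theorem 9.1. For L_m = (z(z−1)∂_z)^m and
R_n = (1/(n!)^m)·(z^n(z−1)^n∂_z^n)^m over ℚ, the operator R_n belongs to I_n(L_m):
R_n·g ∈ ℚ[z] for every g ∈ V_n(L_m). -/
theorem stmt_19 (m n : ℕ) (hm : 1 ≤ m) (hn : 1 ≤ n) :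
    ∀ g ∈ VnA (fun f : LS ℚ =>
        ((fun h : LS ℚ => pmul (Polynomial.X * (Polynomial.X - 1)) (dz h))^[m]) f) n,
      IsPol ((((n.factorial : ℚ) ^ m)⁻¹) •
        (((fun h : LS ℚ =>
            pmul (Polynomial.X ^ n * (Polynomial.X - 1) ^ n) (dz^[n] h))^[m]) g)) := by
  intro g hg
  unfold VnA at hg
  refine Submodule.span_induction
    (p := fun g _ => IsPol ((((n.factorial : ℚ) ^ m)⁻¹) •
      (((fun h : LS ℚ => pmul (Polynomial.X ^ n * (Polynomial.X - 1) ^ n) (dz^[n] h))^[m]) g)))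
    ?_ ?_ ?_ ?_ hg
  · -- generators
    rintro g ⟨κ, hκ, f, hfV, rfl⟩
    show IsPol ((((n.factorial : ℚ) ^ m)⁻¹) •
      (((fun h : LS ℚ => pmul (Polynomial.X ^ n * (Polynomial.X - 1) ^ n) (dz^[n] h))^[m]) _))
    have hPol : IsPol (((fun h : LS ℚ => pmul (Polynomial.X * (Polynomial.X - 1)) (dz h))^[m]) f) :=
      hfV.2
    have hAop : ∀ l : ℤ, 1 ≤ l → (Aop^[m]) f l = 0 := by
      obtain ⟨P, hP⟩ := hPol
      intro l hl
      have h0 : ((fun h : LS ℚ => pmul (Polynomial.X * (Polynomial.X - 1)) (dz h))^[m]) f l = 0 := by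
        rw [hP]
        unfold ofPoly
        rw [if_neg (by omega)]
      rw [T_fun_eq] at h0
      exact h0
    obtain ⟨c, hc⟩ := ker_Aop m f hAop
    apply isPol_smul
    apply isPol_of _ (m*n)
    · -- vanishing for x ≥ 1
      intro x hx
      rw [Rn_eq_chain n m _ x]
      have hgen : ∀ y ≥ (1:ℤ), piProj ((zmul^[κ]) f) y
          = (fun y' => ∑ j ∈ Finset.range m, c j * HH (j:ℤ) (y' + (κ:ℤ))) y := by
        intro y hy
        show (if 1 ≤ y then (zmul^[κ]) f y else 0) = _
        rw [if_pos hy, zmul_iter κ f y, hc (y+κ) (by omega)]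
      have h0 : ((chain n)^[m]) (piProj ((zmul^[κ]) f)) x
          = ((chain n)^[m]) (fun y' => ∑ j ∈ Finset.range m, c j * HH (j:ℤ) (y' + (κ:ℤ))) x :=
        iter_congr n m _ _ hgen x hx
      rw [h0, iter_lincomb]
      have hvan : ∑ j ∈ Finset.range m, c j * ((chain n)^[m])
          (fun y' => HH (j:ℤ) (y' + (κ:ℤ))) x = 0 := by
        apply Finset.sum_eq_zero
        intro j hj
        rw [Finset.mem_range] at hj
        have hmu := mu n hn j κ hκ (m-1) (by omega) x hx
        rw [show m = (m-1)+1 by omega, hmu]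
        ring
      rw [hvan]
      ring
    · -- vanishing on the far left
      intro x hx
      apply Rn_left n _ ?_ m x (by push_cast; omega)
      intro y hy
      show (if 1 ≤ y then (zmul^[κ]) f y else 0) = 0
      rw [if_neg (by omega)]
  · -- zero
    show IsPol ((((n.factorial : ℚ) ^ m)⁻¹) •
      (((fun h : LS ℚ => pmul (Polynomial.X ^ n * (Polynomial.X - 1) ^ n) (dz^[n] h))^[m]) _))
    have hz : ((fun h : LS ℚ =>
        pmul (Polynomial.X ^ n * (Polynomial.X - 1) ^ n) (dz^[n] h))^[m]) (0 : LS ℚ) = 0 := by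
      have h1 := DDm_smul n m 0 (0 : LS ℚ)
      rw [zero_smul, zero_smul] at h1
      exact h1
    rw [hz]
    apply isPol_smul
    refine ⟨0, ?_⟩
    funext x
    unfold ofPoly
    simp
  · -- add
    intro x y _ _ px py
    show IsPol ((((n.factorial : ℚ) ^ m)⁻¹) •
      (((fun h : LS ℚ => pmul (Polynomial.X ^ n * (Polynomial.X - 1) ^ n) (dz^[n] h))^[m]) _))
    rw [DDm_add, smul_add]
    exact isPol_add _ _ px py
  · -- smul
    intro a x _ px
    show IsPol ((((n.factorial : ℚ) ^ m)⁻¹) •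
      (((fun h : LS ℚ => pmul (Polynomial.X ^ n * (Polynomial.X - 1) ^ n) (dz^[n] h))^[m]) _))
    rw [DDm_smul, smul_comm]
    exact isPol_smul a _ px
end
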